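/- arXiv:1906.07270 — 5 statements merged into one kernel-verified Lean document; each statement's English description precedes it below -/
import Mathlib

section
/- Let π and σ be permutations with disjoint domains, and let i ∈ dom(π), i−1 ∈ dom(σ). Let π'' be π with i replaced by i−1, and σ'' be σ with i−1 replaced by i. Then the map T_i on shuffles of π and σ, defined by swapping the entries i and i−1 when they are not adjacent and acting as the identity otherwise, is a descent-set-preserving bijection from π ⧢ σ to π'' ⧢ σ''. -/
/-- The descent set of a word: positions `i` (1-based) with `τ_i > τ_{i+1}`. -/
def Des (τ : List ℕ) : Finset ℕ :=
  (Finset.Ico 1 τ.length).filter (fun i => τ.getD i 0 < τ.getD (i-1) 0)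

/-- The major index. -/
def maj (τ : List ℕ) : ℕ := ∑ i ∈ Des τ, i

/-- The descent number. -/
def des (τ : List ℕ) : ℕ := (Des τ).card

/-- The ascent set. -/
def Asc (τ : List ℕ) : Finset ℕ :=
  (Finset.Ico 1 τ.length).filter (fun i => τ.getD (i-1) 0 < τ.getD i 0)

/-- The peak set: positions `i` (1-based, `2 ≤ i ≤ |τ|-1`) with `τ_{i-1} < τ_i > τ_{i+1}`. -/
def Pk (τ : List ℕ) : Finset ℕ :=
  (Finset.Ico 2 τ.length).filter
    (fun i => τ.getD (i-2) 0 < τ.getD (i-1) 0 ∧ τ.getD i 0 < τ.getD (i-1) 0)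

/-- The valley set. -/
def Val (τ : List ℕ) : Finset ℕ :=
  (Finset.Ico 2 τ.length).filter
    (fun i => τ.getD (i-1) 0 < τ.getD (i-2) 0 ∧ τ.getD (i-1) 0 < τ.getD i 0)

/-- The left peak set: peaks of `0τ`, recorded as positions of `τ`. -/
def Lpk (τ : List ℕ) : Finset ℕ := (Pk (0 :: τ)).image (· - 1)

/-- The right peak set: peaks of `τ0`. -/
def Rpk (τ : List ℕ) : Finset ℕ := Pk (τ ++ [0])

/-- The exterior peak set: peaks of `0τ0`, recorded as positions of `τ`. -/
def Epk (τ : List ℕ) : Finset ℕ := (Pk (0 :: (τ ++ [0]))).image (· - 1)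

def pk (τ : List ℕ) : ℕ := (Pk τ).card
def lpk (τ : List ℕ) : ℕ := (Lpk τ).card

/-- The number of updown runs (maximal monotone factors of `0τ`): for a nonempty
word with distinct letters this is one more than the number of interior
direction changes (peaks and valleys) of `0τ`. -/
def udr (τ : List ℕ) : ℕ :=
  if τ = [] then 0 else 1 + (Pk (0 :: τ) ∪ Val (0 :: τ)).card

/-- A permutation: a sequence of distinct positive integers. -/
def IsPerm (π : List ℕ) : Prop := π.Nodup ∧ ∀ x ∈ π, 0 < x

/-- The list of all shuffles (interleavings) of two words. -/
def shuffles : List ℕ → List ℕ → List (List ℕ)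
  | [], σ => [σ]
  | π, [] => [π]
  | a :: π, b :: σ =>
      ((shuffles π (b :: σ)).map (a :: ·)) ++ ((shuffles (a :: π) σ).map (b :: ·))
  termination_by π σ => π.length + σ.length

/-- A permutation statistic `St` is shuffle compatible if the multiset
distribution of `St` over the shuffles of `π` and `σ` depends only on
`St π`, `St σ` and the lengths. -/
def ShuffleCompatible {α : Type} (St : List ℕ → α) : Prop :=
  ∀ π π' σ σ' : List ℕ, IsPerm π → IsPerm π' → IsPerm σ → IsPerm σ' →
    π.length = π'.length → σ.length = σ'.length →
    π.Disjoint σ → π'.Disjoint σ' →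
    St π = St π' → St σ = St σ' →
    (((shuffles π σ).map St : List α) : Multiset α) = ((shuffles π' σ').map St : List α)

/-- A descent statistic: a statistic depending only on the descent set and length. -/
def IsDescentStat {α : Type} (St : List ℕ → α) : Prop :=
  ∀ π π' : List ℕ, IsPerm π → IsPerm π' → π.length = π'.length →
    Des π = Des π' → St π = St π'

/-- Standardization: replace each entry by its rank. -/
def std (π : List ℕ) : List ℕ := π.map (fun x => (π.filter (· ≤ x)).length)

/-- Replace the entry `i` by `i-1` and vice versa. -/
def swapEntries (i : ℕ) (τ : List ℕ) : List ℕ :=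
  τ.map (fun x => if x = i then i - 1 else if x = i - 1 then i else x)

/-- The map `T_i`: swap `i` and `i-1` unless they are adjacent. -/
def Ti (i : ℕ) (τ : List ℕ) : List ℕ :=
  if [i, i-1] <:+: τ ∨ [i-1, i] <:+: τ then τ else swapEntries i τ

inductive Shuf : List ℕ → List ℕ → List ℕ → Prop
  | nil : Shuf [] [] []
  | left {π σ τ} (a) : Shuf π σ τ → Shuf (a::π) σ (a::τ)
  | right {π σ τ} (b) : Shuf π σ τ → Shuf π (b::σ) (b::τ)

lemma shuf_nil_left (σ : List ℕ) : Shuf [] σ σ := by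
  induction σ with
  | nil => exact Shuf.nil
  | cons b σ ih => exact Shuf.right b ih

lemma shuf_nil_right (π : List ℕ) : Shuf π [] π := by
  induction π with
  | nil => exact Shuf.nil
  | cons a π ih => exact Shuf.left a ih

lemma shuf_symm {π σ τ : List ℕ} (h : Shuf π σ τ) : Shuf σ π τ := by
  induction h with
  | nil => exact Shuf.nil
  | left a _ ih => exact Shuf.right a ih
  | right b _ ih => exact Shuf.left b ih

lemma shuf_nil_snd_eq {π σ τ : List ℕ} (h : Shuf π σ τ) (hσ : σ = []) : τ = π := by
  induction h with
  | nil => rfl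
  | left a _ ih => rw [ih hσ]
  | right b _ _ => simp at hσ

lemma shuf_nil_fst_eq {π σ τ : List ℕ} (h : Shuf π σ τ) (hπ : π = []) : τ = σ := by
  exact shuf_nil_snd_eq (shuf_symm h) hπ

lemma mem_shuffles {π σ τ : List ℕ} : τ ∈ shuffles π σ ↔ Shuf π σ τ := by
  induction π, σ using shuffles.induct generalizing τ with
  | case1 σ =>
    simp only [shuffles, List.mem_singleton]
    constructor
    · rintro rfl; exact shuf_nil_left _
    · intro h; exact shuf_nil_fst_eq h rfl
  | case2 π hπ =>
    match π, hπ with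
    | a :: π, _ =>
      simp only [shuffles, List.mem_singleton]
      constructor
      · rintro rfl; exact shuf_nil_right _
      · intro h; exact shuf_nil_snd_eq h rfl
  | case3 a π b σ ih1 ih2 =>
    rw [shuffles]
    simp only [List.mem_append, List.mem_map]
    constructor
    · rintro (⟨τ', hτ', rfl⟩ | ⟨τ', hτ', rfl⟩)
      · exact Shuf.left a (ih1.mp hτ')
      · exact Shuf.right b (ih2.mp hτ')
    · intro h
      cases h with
      | left a h => exact Or.inl ⟨_, ih1.mpr h, rfl⟩
      | right b h => exact Or.inr ⟨_, ih2.mpr h, rfl⟩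

lemma shuf_cons_inv {π σ τ : List ℕ} {x : ℕ} (h : Shuf π σ (x :: τ)) :
    (∃ π', π = x :: π' ∧ Shuf π' σ τ) ∨ (∃ σ', σ = x :: σ' ∧ Shuf π σ' τ) := by
  cases h with
  | left a h => exact Or.inl ⟨_, rfl, h⟩
  | right b h => exact Or.inr ⟨_, rfl, h⟩

lemma shuf_append {p1 s1 t1 p2 s2 t2 : List ℕ} (h1 : Shuf p1 s1 t1)
    (h2 : Shuf p2 s2 t2) : Shuf (p1 ++ p2) (s1 ++ s2) (t1 ++ t2) := by
  induction h1 with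
  | nil => exact h2
  | left a _ ih => exact Shuf.left a ih
  | right b _ ih => exact Shuf.right b ih

lemma shuf_map (f : ℕ → ℕ) {π σ τ : List ℕ} (h : Shuf π σ τ) :
    Shuf (π.map f) (σ.map f) (τ.map f) := by
  induction h with
  | nil => exact Shuf.nil
  | left a _ ih => exact Shuf.left (f a) ih
  | right b _ ih => exact Shuf.right (f b) ih

lemma shuf_split (A : List ℕ) : ∀ {π σ B : List ℕ}, Shuf π σ (A ++ B) →
    ∃ pA pB sA sB, π = pA ++ pB ∧ σ = sA ++ sB ∧ Shuf pA sA A ∧ Shuf pB sB B := by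
  induction A with
  | nil => intro π σ B h; exact ⟨[], π, [], σ, rfl, rfl, Shuf.nil, h⟩
  | cons a A ih =>
    intro π σ B h
    cases h with
    | left a h =>
      obtain ⟨pA, pB, sA, sB, rfl, rfl, h1, h2⟩ := ih h
      exact ⟨a :: pA, pB, sA, sB, rfl, rfl, Shuf.left a h1, h2⟩
    | right _ h =>
      obtain ⟨pA, pB, sA, sB, rfl, rfl, h1, h2⟩ := ih h
      exact ⟨pA, pB, a :: sA, sB, rfl, rfl, Shuf.right a h1, h2⟩

lemma swap_fixes {i : ℕ} {l : List ℕ} (h1 : i ∉ l) (h2 : i - 1 ∉ l) :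
    swapEntries i l = l := by
  unfold swapEntries
  rw [show l = l.map id by simp]
  simp only [List.map_map]
  apply List.map_congr_left
  intro x hx
  have : x ≠ i := fun h => h1 (h ▸ hx)
  have : x ≠ i - 1 := fun h => h2 (h ▸ hx)
  simp_all

lemma swap_append (i : ℕ) (A B : List ℕ) :
    swapEntries i (A ++ B) = swapEntries i A ++ swapEntries i B := by
  simp [swapEntries]

lemma swap_cons (i x : ℕ) (A : List ℕ) :
    swapEntries i (x :: A) = (if x = i then i - 1 else if x = i - 1 then i else x)
      :: swapEntries i A := by simp [swapEntries]

lemma shuf_split_pair {π σ τ : List ℕ} {x y : ℕ} (h : Shuf π σ τ)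
    (hxσ : x ∉ σ) (hyπ : y ∉ π) (A B : List ℕ) (hAB : τ = A ++ x :: y :: B) :
    ∃ pA pB sA sB, π = pA ++ x :: pB ∧ σ = sA ++ y :: sB ∧
      Shuf pA sA A ∧ Shuf pB sB B := by
  subst hAB
  obtain ⟨pA, pB, sA, sB, rfl, rfl, h1, h2⟩ := shuf_split A h
  rcases shuf_cons_inv h2 with ⟨pB', rfl, h3⟩ | ⟨sB', rfl, h3⟩
  · rcases shuf_cons_inv h3 with ⟨pB'', rfl, h4⟩ | ⟨sB'', rfl, h4⟩
    · exact absurd (by simp : y ∈ pA ++ x :: y :: pB'') hyπ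
    · exact ⟨pA, pB', sA, sB'', rfl, rfl, h1, h4⟩
  · exact absurd (by simp : x ∈ sA ++ x :: sB') hxσ

lemma swap_at_i {i : ℕ} {l1 l2 : List ℕ} (hn : (l1 ++ i :: l2).Nodup)
    (h1 : i - 1 ∉ l1 ++ i :: l2) :
    swapEntries i (l1 ++ i :: l2) = l1 ++ (i - 1) :: l2 := by
  have hi1 : i ∉ l1 := fun hx => (List.disjoint_of_nodup_append hn) hx (by simp)
  have hi2 : i ∉ l2 := by
    have := (List.nodup_append.mp hn).2.1; simp at this; exact this.1
  simp only [List.mem_append, List.mem_cons, not_or] at h1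
  rw [swap_append, swap_cons, if_pos rfl, swap_fixes hi1 h1.1,
    swap_fixes hi2 (fun hx => h1.2.2 hx)]

lemma swap_at_i1 {i : ℕ} {l1 l2 : List ℕ} (hne : i ≠ i - 1)
    (hn : (l1 ++ (i - 1) :: l2).Nodup) (h1 : i ∉ l1 ++ (i - 1) :: l2) :
    swapEntries i (l1 ++ (i - 1) :: l2) = l1 ++ i :: l2 := by
  have hi1 : i - 1 ∉ l1 := fun hx => (List.disjoint_of_nodup_append hn) hx (by simp)
  have hi2 : i - 1 ∉ l2 := by
    have := (List.nodup_append.mp hn).2.1; simp at this; exact this.1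
  simp only [List.mem_append, List.mem_cons, not_or] at h1
  rw [swap_append, swap_cons, if_neg hne.symm, if_pos rfl,
    swap_fixes h1.1 hi1, swap_fixes (fun hx => h1.2.2 hx) hi2]

lemma shuf_mem {π σ τ : List ℕ} (h : Shuf π σ τ) {x : ℕ} (hx : x ∈ τ) :
    x ∈ π ∨ x ∈ σ := by
  induction h with
  | nil => simp at hx
  | left a _ ih =>
    rcases List.mem_cons.mp hx with rfl | hx
    · exact Or.inl (by simp)
    · rcases ih hx with h | h
      · exact Or.inl (by simp [h])
      · exact Or.inr h
  | right b _ ih =>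
    rcases List.mem_cons.mp hx with rfl | hx
    · exact Or.inr (by simp)
    · rcases ih hx with h | h
      · exact Or.inl h
      · exact Or.inr (by simp [h])

/-- Core lemma: the adjacent case. -/
lemma shuf_swap_adj {π σ τ : List ℕ} {i : ℕ} (h : Shuf π σ τ)
    (hnπ : π.Nodup) (hnσ : σ.Nodup)
    (hiσ : i ∉ σ) (hi1π : i - 1 ∉ π)
    (hadj : [i, i-1] <:+: τ ∨ [i-1, i] <:+: τ) :
    Shuf (swapEntries i π) (swapEntries i σ) τ := by
  have hne : i ≠ i - 1 := by
    intro heq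
    have hiτ : i ∈ τ := by
      rcases hadj with ⟨A, B, hAB⟩ | ⟨A, B, hAB⟩ <;> subst hAB <;> simp
    rcases shuf_mem h hiτ with h' | h'
    · rw [heq] at h'; exact hi1π h'
    · exact hiσ h'
  rcases hadj with ⟨A, B, rfl⟩ | ⟨A, B, rfl⟩
  · obtain ⟨pA, pB, sA, sB, rfl, rfl, h1, h2⟩ :=
      shuf_split_pair h hiσ hi1π A B (by simp)
    rw [swap_at_i hnπ hi1π, swap_at_i1 hne hnσ hiσ]
    have : Shuf ((i-1) :: pB) (i :: sB) (i :: (i-1) :: B) :=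
      Shuf.right i (Shuf.left (i-1) h2)
    simpa using shuf_append h1 this
  · obtain ⟨sA, sB, pA, pB, rfl, rfl, h1, h2⟩ :=
      shuf_split_pair (shuf_symm h) hi1π hiσ A B (by simp)
    rw [swap_at_i hnπ hi1π, swap_at_i1 hne hnσ hiσ]
    have : Shuf (i :: sB) ((i-1) :: pB) ((i-1) :: i :: B) :=
      Shuf.right (i-1) (Shuf.left i h2)
    simpa using shuf_symm (shuf_append h1 this)

lemma infix_of_adjacent {τ : List ℕ} {j a b : ℕ} (hj1 : 1 ≤ j) (hj : j < τ.length)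
    (ha : τ.getD (j-1) 0 = a) (hb : τ.getD j 0 = b) : [a, b] <:+: τ := by
  have h1 : j - 1 < τ.length := lt_of_le_of_lt (Nat.sub_le _ _) hj
  have ha' : τ[j-1] = a := by rw [← List.getD_eq_getElem τ 0 h1, ha]
  have hb' : τ[j] = b := by rw [← List.getD_eq_getElem τ 0 hj, hb]
  have hd1 : τ.drop (j-1) = a :: b :: τ.drop (j+1) := by
    rw [List.drop_eq_getElem_cons h1, ha']
    have : j - 1 + 1 = j := by omega
    rw [this, List.drop_eq_getElem_cons hj, hb']
  exact ⟨τ.take (j-1), τ.drop (j+1), by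
    rw [List.append_assoc, show [a,b] ++ τ.drop (j+1) = a :: b :: τ.drop (j+1) from rfl,
      ← hd1, List.take_append_drop]⟩

lemma des_swap {i : ℕ} (hi : 2 ≤ i) {τ : List ℕ}
    (h : ¬([i, i-1] <:+: τ ∨ [i-1, i] <:+: τ)) :
    Des (swapEntries i τ) = Des τ := by
  push_neg at h
  unfold Des swapEntries
  rw [List.length_map]
  apply Finset.filter_congr
  intro j hj
  rw [Finset.mem_Ico] at hj
  have h1 : j - 1 < τ.length := lt_of_le_of_lt (Nat.sub_le _ _) hj.2
  rw [List.getD_eq_getElem _ 0 (by rw [List.length_map]; exact hj.2),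
    List.getD_eq_getElem _ 0 (by rw [List.length_map]; exact h1),
    List.getElem_map, List.getElem_map,
    List.getD_eq_getElem τ 0 hj.2, List.getD_eq_getElem τ 0 h1]
  have e1 : ¬(τ[j-1] = i ∧ τ[j] = i - 1) := by
    rintro ⟨ha, hb⟩
    exact h.1 (infix_of_adjacent hj.1 hj.2
      (by rw [List.getD_eq_getElem τ 0 h1, ha]) (by rw [List.getD_eq_getElem τ 0 hj.2, hb]))
  have e2 : ¬(τ[j-1] = i - 1 ∧ τ[j] = i) := by
    rintro ⟨ha, hb⟩
    exact h.2 (infix_of_adjacent hj.1 hj.2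
      (by rw [List.getD_eq_getElem τ 0 h1, ha]) (by rw [List.getD_eq_getElem τ 0 hj.2, hb]))
  generalize τ[j-1] = a at e1 e2
  generalize τ[j] = b at e1 e2
  split_ifs <;> omega

lemma des_Ti {i : ℕ} (hi : 2 ≤ i) (τ : List ℕ) : Des (Ti i τ) = Des τ := by
  unfold Ti
  split_ifs with h
  · rfl
  · exact des_swap hi h

lemma swapFun_invol {i : ℕ} (hi : 2 ≤ i) :
    Function.Involutive (fun x => if x = i then i - 1 else if x = i - 1 then i else x) := by
  intro x; dsimp only; split_ifs <;> omega

lemma swap_swap {i : ℕ} (hi : 2 ≤ i) (l : List ℕ) :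
    swapEntries i (swapEntries i l) = l := by
  unfold swapEntries
  rw [List.map_map]
  conv_rhs => rw [show l = l.map id from (List.map_id l).symm]
  exact List.map_congr_left (fun a _ => swapFun_invol hi a)

lemma adj_swap_iff {i : ℕ} (hi : 2 ≤ i) (τ : List ℕ) :
    ([i, i-1] <:+: swapEntries i τ ∨ [i-1, i] <:+: swapEntries i τ) ↔
      ([i, i-1] <:+: τ ∨ [i-1, i] <:+: τ) := by
  have hne : ¬(i - 1 = i) := by omega
  have key : ∀ l : List ℕ, [i, i-1] <:+: l → [i-1, i] <:+: swapEntries i l := by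
    intro l hl
    have := hl.map (fun x => if x = i then i - 1 else if x = i - 1 then i else x)
    simpa [hne, swapEntries] using this
  have key2 : ∀ l : List ℕ, [i-1, i] <:+: l → [i, i-1] <:+: swapEntries i l := by
    intro l hl
    have := hl.map (fun x => if x = i then i - 1 else if x = i - 1 then i else x)
    simpa [hne, swapEntries] using this
  constructor
  · rintro (h | h)
    · have := key _ h; rw [swap_swap hi] at this; exact Or.inr this
    · have := key2 _ h; rw [swap_swap hi] at this; exact Or.inl this
  · rintro (h | h)
    · exact Or.inr (key _ h)
    · exact Or.inl (key2 _ h)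

lemma Ti_invol {i : ℕ} (hi : 2 ≤ i) (τ : List ℕ) : Ti i (Ti i τ) = τ := by
  unfold Ti
  by_cases h : [i, i-1] <:+: τ ∨ [i-1, i] <:+: τ
  · rw [if_pos h, if_pos h]
  · rw [if_neg h, if_neg (fun h' => h ((adj_swap_iff hi τ).mp h')), swap_swap hi]

/-- `T_i` is a descent-set preserving bijection from `π ⧢ σ` to `π'' ⧢ σ''`. -/
theorem stmt1 (π σ : List ℕ) (i : ℕ) (hπ : IsPerm π) (hσ : IsPerm σ)
    (hd : π.Disjoint σ) (hi : i ∈ π) (hi' : i - 1 ∈ σ) :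
    Set.BijOn (Ti i) {τ | τ ∈ shuffles π σ}
        {τ | τ ∈ shuffles (swapEntries i π) (swapEntries i σ)} ∧
      ∀ τ ∈ shuffles π σ, Des (Ti i τ) = Des τ := by
  have hi2 : 2 ≤ i := by have := hσ.2 _ hi'; omega
  set f : ℕ → ℕ := fun x => if x = i then i - 1 else if x = i - 1 then i else x with hf
  have hfinv : Function.Involutive f := swapFun_invol hi2
  have hfinj : Function.Injective f := hfinv.injective
  have hiσ : i ∉ σ := fun h' => hd hi h'
  have hi1π : i - 1 ∉ π := fun h' => hd h' hi'
  -- facts about the images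
  have hswπ : ∀ l : List ℕ, swapEntries i l = l.map f := fun l => rfl
  have hnπ' : (swapEntries i π).Nodup := hπ.1.map hfinj
  have hnσ' : (swapEntries i σ).Nodup := hσ.1.map hfinj
  have hmem : ∀ (l : List ℕ) (x : ℕ), x ∈ swapEntries i l ↔ f x ∈ l := by
    intro l x
    rw [hswπ, List.mem_map]
    constructor
    · rintro ⟨a, ha, rfl⟩; rwa [hfinv a]
    · intro hx; exact ⟨f x, hx, hfinv x⟩
  have hfi : f i = i - 1 := by simp [hf]
  have hfi1 : f (i-1) = i := by simp only [hf]; split_ifs <;> omega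
  have hiπ'' : i ∉ swapEntries i π := by rw [hmem, hfi]; exact hi1π
  have hi1π'' : i - 1 ∈ swapEntries i π := by rw [hmem, hfi1]; exact hi
  have hiσ'' : i ∈ swapEntries i σ := by rw [hmem, hfi]; exact hi'
  have hi1σ'' : i - 1 ∉ swapEntries i σ := by rw [hmem, hfi1]; exact hiσ
  -- forward mapsTo
  have fwd : ∀ τ, Shuf π σ τ → Shuf (swapEntries i π) (swapEntries i σ) (Ti i τ) := by
    intro τ hτ
    unfold Ti
    split_ifs with hc
    · exact shuf_swap_adj hτ hπ.1 hσ.1 hiσ hi1π hc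
    · exact shuf_map f hτ
  have bwd : ∀ τ, Shuf (swapEntries i π) (swapEntries i σ) τ → Shuf π σ (Ti i τ) := by
    intro τ hτ
    unfold Ti
    split_ifs with hc
    · have := shuf_swap_adj (shuf_symm hτ) hnσ' hnπ' hiπ'' hi1σ''
        (by rcases hc with h | h; exacts [Or.inl h, Or.inr h])
      rw [swap_swap hi2, swap_swap hi2] at this
      exact shuf_symm this
    · have := shuf_map f hτ
      rw [← hswπ, ← hswπ, ← hswπ, swap_swap hi2, swap_swap hi2] at this
      exact this
  constructor
  · apply Set.InvOn.bijOn (f' := Ti i)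
    · exact ⟨fun τ _ => Ti_invol hi2 τ, fun τ _ => Ti_invol hi2 τ⟩
    · intro τ hτ
      simp only [Set.mem_setOf_eq, mem_shuffles] at hτ ⊢
      exact fwd τ hτ
    · intro τ hτ
      simp only [Set.mem_setOf_eq, mem_shuffles] at hτ ⊢
      exact bwd τ hτ
  · intro τ _
    exact des_Ti hi2 τ
end

section
/- The descent set statistic Des is shuffle compatible: if |π| = |π'|, |σ| = |σ'|, Des(π) = Des(π'), Des(σ) = Des(σ'), and dom(π) ∩ dom(σ) = dom(π') ∩ dom(σ') = ∅, then the multisets Des(π ⧢ σ) and Des(π' ⧢ σ') coincide. -/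
lemma shuffles_nil_left (σ : List ℕ) : shuffles [] σ = [σ] := by rw [shuffles]
lemma shuffles_nil_right (π : List ℕ) : shuffles π [] = [π] := by
  match π with
  | [] => rw [shuffles]
  | a :: π => rw [shuffles]; simp

lemma shuffles_cons_cons (a b : ℕ) (π σ : List ℕ) :
    shuffles (a :: π) (b :: σ) =
      ((shuffles π (b :: σ)).map (a :: ·)) ++ ((shuffles (a :: π) σ).map (b :: ·)) := by
  rw [shuffles]

lemma mem_Des {τ : List ℕ} {i : ℕ} :
    i ∈ Des τ ↔ 1 ≤ i ∧ i < τ.length ∧ τ.getD i 0 < τ.getD (i-1) 0 := by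
  simp [Des, Finset.mem_filter, Finset.mem_Ico, and_assoc]

lemma Des_subset_Ico (τ : List ℕ) : Des τ ⊆ Finset.Ico 1 τ.length :=
  Finset.filter_subset _ _

lemma shuffles_perm : ∀ π σ τ : List ℕ, τ ∈ shuffles π σ → τ.Perm (π ++ σ) := by
  intro π σ
  induction π, σ using shuffles.induct with
  | case1 σ => intro τ h; simp [shuffles_nil_left] at h; simp [h]
  | case2 π h => intro τ hh; rw [shuffles_nil_right] at hh; simp at hh; simp [hh]
  | case3 a π b σ ih1 ih2 =>
    intro τ h
    rw [shuffles_cons_cons] at h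
    simp only [List.mem_append, List.mem_map] at h
    rcases h with ⟨τ', hτ', rfl⟩ | ⟨τ', hτ', rfl⟩
    · exact (ih1 τ' hτ').cons a
    · refine ((ih2 τ' hτ').cons b).trans ?_
      have h1 : ([b] ++ ((a :: π) ++ σ) : List ℕ).Perm ((a :: π) ++ ([b] ++ σ)) := by
        exact List.perm_append_comm_assoc [b] (a :: π) σ
      simpa using h1

lemma shuffles_sublist : ∀ π σ τ : List ℕ, τ ∈ shuffles π σ → π.Sublist τ ∧ σ.Sublist τ := by
  intro π σ
  induction π, σ using shuffles.induct with
  | case1 σ => intro τ h; simp [shuffles_nil_left] at h; simp [h]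
  | case2 π h => intro τ hh; rw [shuffles_nil_right] at hh; simp at hh; simp [hh]
  | case3 a π b σ ih1 ih2 =>
    intro τ h
    rw [shuffles_cons_cons] at h
    simp only [List.mem_append, List.mem_map] at h
    rcases h with ⟨τ', hτ', rfl⟩ | ⟨τ', hτ', rfl⟩
    · exact ⟨(ih1 τ' hτ').1.cons₂ a, ((ih1 τ' hτ').2).cons a⟩
    · exact ⟨((ih2 τ' hτ').1).cons b, (ih2 τ' hτ').2.cons₂ b⟩

lemma getD_take' (τ : List ℕ) {j i : ℕ} (h : i < j) (h2 : i < τ.length) :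
    (τ.take j).getD i 0 = τ.getD i 0 := by
  rw [List.getD_eq_getElem _ 0 (by simp [List.length_take]; omega),
      List.getD_eq_getElem _ 0 h2, List.getElem_take]

lemma getD_drop' (τ : List ℕ) {j i : ℕ} (h : i < τ.length - j) :
    (τ.drop j).getD i 0 = τ.getD (j+i) 0 := by
  rw [List.getD_eq_getElem _ 0 (by simp [List.length_drop]; omega),
      List.getD_eq_getElem _ 0 (by omega), List.getElem_drop]

lemma chain'_le_iff_getD {τ : List ℕ} :
    τ.Chain' (· ≤ ·) ↔ ∀ i, i + 1 < τ.length → τ.getD i 0 ≤ τ.getD (i+1) 0 := by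
  unfold List.Chain'; rw [List.isChain_iff_getElem]
  constructor
  · intro h i hi
    have h2 := h i (by omega)
    rw [List.getD_eq_getElem _ 0 (by omega), List.getD_eq_getElem _ 0 (by omega)]
    exact h2
  · intro h i hi
    have h2 := h i (by omega)
    rw [List.getD_eq_getElem _ 0 (by omega), List.getD_eq_getElem _ 0 (by omega)] at h2
    simpa only [List.get_eq_getElem] using h2

lemma Des_eq_empty_iff {τ : List ℕ} : Des τ = ∅ ↔ τ.Chain' (· ≤ ·) := by
  rw [chain'_le_iff_getD, Finset.eq_empty_iff_forall_notMem]
  constructor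
  · intro h i hi
    have h2 := h (i+1)
    rw [mem_Des] at h2
    push_neg at h2
    have h3 := h2 (by omega) (by omega)
    simpa using h3
  · intro h i hi
    rw [mem_Des] at hi
    obtain ⟨h1, h2, h3⟩ := hi
    have h4 := h (i-1) (by omega)
    have e : i - 1 + 1 = i := by omega
    rw [e] at h4
    omega

lemma Des_take {τ : List ℕ} {j : ℕ} : Des (τ.take j) = (Des τ).filter (· < j) := by
  ext i
  simp only [mem_Des, Finset.mem_filter, List.length_take]
  constructor
  · rintro ⟨h1, h2, h3⟩
    rw [getD_take' τ (by omega) (by omega), getD_take' τ (by omega) (by omega)] at h3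
    exact ⟨⟨h1, by omega, h3⟩, by omega⟩
  · rintro ⟨⟨h1, h2, h3⟩, hij⟩
    rw [getD_take' τ (by omega) (by omega), getD_take' τ (by omega) (by omega)]
    exact ⟨h1, by omega, h3⟩

lemma Des_drop {τ : List ℕ} {j : ℕ} :
    Des (τ.drop j) = ((Des τ).filter (j < ·)).image (· - j) := by
  ext i
  simp only [mem_Des, Finset.mem_image, Finset.mem_filter, List.length_drop]
  constructor
  · rintro ⟨h1, h2, h3⟩
    rw [getD_drop' τ (by omega), getD_drop' τ (by omega)] at h3
    refine ⟨i + j, ⟨⟨by omega, by omega, ?_⟩, by omega⟩, by omega⟩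
    have e1 : i + j - 1 = j + (i-1) := by omega
    have e2 : i + j = j + i := by omega
    rw [e1, e2]
    exact h3
  · rintro ⟨k, ⟨⟨h1, h2, h3⟩, h4⟩, rfl⟩
    refine ⟨by omega, by omega, ?_⟩
    rw [getD_drop' τ (by omega), getD_drop' τ (by omega)]
    have e1 : j + (k - j) = k := by omega
    have e2 : j + (k - j - 1) = k - 1 := by omega
    rw [e1, e2]
    exact h3

lemma Des_append_subset_iff {α β : List ℕ} {S : Finset ℕ} {s : ℕ}
    (hα : α.length = s) (hs : s ∈ S) (hmax : ∀ i ∈ S, i ≤ s) :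
    Des (α ++ β) ⊆ S ↔ Des α ⊆ S ∧ Des β = ∅ := by
  have len : (α ++ β).length = s + β.length := by simp [hα]
  have mem_lt : ∀ i, i < s → (i ∈ Des (α ++ β) ↔ i ∈ Des α) := by
    intro i hi
    simp only [mem_Des, len, hα]
    constructor
    · rintro ⟨h1, h2, h3⟩
      rw [List.getD_append _ _ 0 _ (by omega), List.getD_append _ _ 0 _ (by omega)] at h3
      exact ⟨h1, by omega, h3⟩
    · rintro ⟨h1, h2, h3⟩
      rw [List.getD_append _ _ 0 _ (by omega), List.getD_append _ _ 0 _ (by omega)]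
      exact ⟨h1, by omega, h3⟩
  have mem_gt : ∀ i, s < i → (i ∈ Des (α ++ β) ↔ i - s ∈ Des β) := by
    intro i hi
    simp only [mem_Des, len]
    constructor
    · rintro ⟨h1, h2, h3⟩
      rw [List.getD_append_right _ _ 0 _ (by omega), List.getD_append_right _ _ 0 _ (by omega),
          hα] at h3
      refine ⟨by omega, by omega, ?_⟩
      have e : i - 1 - s = i - s - 1 := by omega
      rwa [e] at h3
    · rintro ⟨h1, h2, h3⟩
      refine ⟨by omega, by omega, ?_⟩
      rw [List.getD_append_right _ _ 0 _ (by omega), List.getD_append_right _ _ 0 _ (by omega), hα]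
      have e : i - 1 - s = i - s - 1 := by omega
      rwa [e]
  constructor
  · intro h
    constructor
    · intro i hi
      have hi' : i < s := by
        have := (mem_Des.1 hi).2.1; omega
      exact h ((mem_lt i hi').2 hi)
    · rw [Finset.eq_empty_iff_forall_notMem]
      intro k hk
      have h1 : 1 ≤ k := (mem_Des.1 hk).1
      have : k + s ∈ Des (α ++ β) := by
        rw [mem_gt (k+s) (by omega)]
        simpa using hk
      have := hmax _ (h this)
      omega
  · rintro ⟨h1, h2⟩ i hi
    have hi1 : 1 ≤ i := (mem_Des.1 hi).1
    rcases lt_trichotomy i s with h | rfl | h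
    · exact h1 ((mem_lt i h).1 hi)
    · exact hs
    · exfalso
      have := (mem_gt i h).1 hi
      rw [h2] at this
      simp at this

lemma bind_map_comm' {α β γ : Type} (M : Multiset α) (f : β → Multiset γ) (g : α → β) :
    (M.map g).bind f = M.bind (fun x => f (g x)) := by
  simp [Multiset.bind, Multiset.map_map]

lemma map_msum {α β : Type} (f : α → β) (t : Finset ℕ) (g : ℕ → Multiset α) :
    Multiset.map f (∑ j ∈ t, g j) = ∑ j ∈ t, Multiset.map f (g j) := by
  induction t using Finset.cons_induction with
  | empty => simp
  | cons a t ha ih => simp [Finset.sum_insert ha, ih]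

lemma bind_map_cons (c : ℕ) (M D : Multiset (List ℕ)) :
    (M.bind (fun α => D.map (fun β => c :: (α ++ β))))
      = Multiset.map (c :: ·) (M.bind (fun α => D.map (fun β => α ++ β))) := by
  rw [Multiset.map_bind]
  congr 1
  funext α
  rw [Multiset.map_map]
  rfl

def sTerm (π σ : List ℕ) (s j : ℕ) : Multiset (List ℕ) :=
  if j ≤ π.length ∧ s - j ≤ σ.length then
    ((shuffles (π.take j) (σ.take (s-j)) : Multiset (List ℕ))).bind
      (fun α => ((shuffles (π.drop j) (σ.drop (s-j)) : Multiset (List ℕ))).map (fun β => α ++ β))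
  else 0

lemma shuffles_split : ∀ (s : ℕ) (π σ : List ℕ), s ≤ π.length + σ.length →
    (shuffles π σ : Multiset (List ℕ)) = ∑ j ∈ Finset.range (s+1), sTerm π σ s j := by
  intro s
  induction s with
  | zero =>
    intro π σ _
    rw [Finset.sum_range_one]
    simp only [sTerm, Nat.zero_sub, List.take_zero, List.drop_zero, Nat.zero_le, and_self, if_pos,
      shuffles_nil_left]
    have : ((([[]] : List (List ℕ)) : Multiset (List ℕ))) = {([] : List ℕ)} := rfl
    rw [this, Multiset.singleton_bind]
    simp
  | succ s IH =>
    intro π σ h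
    match π, σ with
    | [], σ =>
      rw [shuffles_nil_left]
      rw [Finset.sum_eq_single_of_mem 0 (by simp)]
      · simp only [sTerm, List.length_nil, Nat.le_zero, List.take_nil, List.drop_nil,
          Nat.sub_zero, List.take_zero]
        simp only [List.length_nil] at h
        rw [if_pos ⟨by trivial, by omega⟩, shuffles_nil_left, shuffles_nil_left]
        have e1 : (((([σ.take (s+1)]) : List (List ℕ))) : Multiset (List ℕ)) = {σ.take (s+1)} := rfl
        have e2 : (((([σ.drop (s+1)]) : List (List ℕ))) : Multiset (List ℕ)) = {σ.drop (s+1)} := rfl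
        rw [e1, e2, Multiset.singleton_bind, Multiset.map_singleton, List.take_append_drop]
        rfl
      · intro j _ hj
        simp only [sTerm, List.length_nil]
        rw [if_neg]; omega
    | a :: π, [] =>
      rw [shuffles_nil_right]
      rw [Finset.sum_eq_single_of_mem (s+1) (by simp)]
      · simp only [sTerm, List.length_cons, List.length_nil] at h ⊢
        rw [if_pos ⟨by omega, by omega⟩]
        simp only [Nat.sub_self, List.take_zero, List.take_nil, List.drop_nil, shuffles_nil_right]
        have e1 : ((([List.take (s+1) (a :: π)]) : List (List ℕ)) : Multiset (List ℕ))
            = {List.take (s+1) (a :: π)} := rfl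
        have e2 : ((([List.drop (s+1) (a :: π)]) : List (List ℕ)) : Multiset (List ℕ))
            = {List.drop (s+1) (a :: π)} := rfl
        rw [e1, e2, Multiset.singleton_bind, Multiset.map_singleton, List.take_append_drop]
        rfl
      · intro j hj hj'
        simp only [sTerm, List.length_nil]
        rw [if_neg]
        simp only [Finset.mem_range] at hj
        omega
    | a :: π, b :: σ =>
      simp only [List.length_cons] at h
      have IH1 := IH π (b :: σ) (by simp; omega)
      have IH2 := IH (a :: π) σ (by simp; omega)
      have coeL : ((shuffles (a::π) (b::σ) : List (List ℕ)) : Multiset (List ℕ))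
          = Multiset.map (a :: ·) (shuffles π (b::σ) : Multiset (List ℕ))
            + Multiset.map (b :: ·) (shuffles (a::π) σ : Multiset (List ℕ)) := by
        rw [shuffles_cons_cons, ← Multiset.coe_add, ← Multiset.map_coe, ← Multiset.map_coe]
      rw [coeL, IH1, IH2, map_msum, map_msum]
      -- RHS reshaping
      rw [Finset.sum_range_succ' (fun j => sTerm (a::π) (b::σ) (s+1) j) (s+1)]
      rw [Finset.sum_range_succ (fun i => sTerm (a::π) (b::σ) (s+1) (i+1)) s]
      rw [Finset.sum_range_succ (fun j => Multiset.map (a :: ·) (sTerm π (b::σ) s j)) s]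
      rw [Finset.sum_range_succ' (fun j => Multiset.map (b :: ·) (sTerm (a::π) σ s j)) s]
      have claim0 : sTerm (a::π) (b::σ) (s+1) 0 = Multiset.map (b :: ·) (sTerm (a::π) σ s 0) := by
        simp only [sTerm, List.take_zero, List.drop_zero, Nat.sub_zero, List.length_cons]
        by_cases hg : s ≤ σ.length
        · rw [if_pos ⟨by omega, by omega⟩, if_pos ⟨by omega, by omega⟩]
          have e : s + 1 = s + 1 := rfl
          rw [show List.take (s+1) (b::σ) = b :: List.take s σ from List.take_succ_cons,
              show List.drop (s+1) (b::σ) = List.drop s σ from List.drop_succ_cons]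
          rw [shuffles_nil_left, shuffles_nil_left]
          have e1 : ((([b :: List.take s σ]) : List (List ℕ)) : Multiset (List ℕ))
              = {b :: List.take s σ} := rfl
          have e2 : ((([List.take s σ]) : List (List ℕ)) : Multiset (List ℕ))
              = {List.take s σ} := rfl
          rw [e1, e2, Multiset.singleton_bind, Multiset.singleton_bind, Multiset.map_map]
          rfl
        · rw [if_neg (by omega), if_neg (by omega)]
          simp
      have claimTop : sTerm (a::π) (b::σ) (s+1) (s+1)
          = Multiset.map (a :: ·) (sTerm π (b::σ) s s) := by
        simp only [sTerm, List.length_cons, Nat.sub_self]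
        by_cases hg : s ≤ π.length
        · rw [if_pos ⟨by omega, by omega⟩, if_pos ⟨by omega, by omega⟩]
          rw [show List.take (s+1) (a::π) = a :: List.take s π from List.take_succ_cons,
              show List.drop (s+1) (a::π) = List.drop s π from List.drop_succ_cons]
          simp only [List.take_zero, List.drop_zero]
          rw [shuffles_nil_right, shuffles_nil_right]
          have e1 : ((([a :: List.take s π]) : List (List ℕ)) : Multiset (List ℕ))
              = {a :: List.take s π} := rfl
          have e2 : ((([List.take s π]) : List (List ℕ)) : Multiset (List ℕ))
              = {List.take s π} := rfl
          rw [e1, e2, Multiset.singleton_bind, Multiset.singleton_bind, Multiset.map_map]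
          rfl
        · rw [if_neg (by omega), if_neg (by omega)]
          simp
      have claimMid : ∀ i ∈ Finset.range s, sTerm (a::π) (b::σ) (s+1) (i+1)
          = Multiset.map (a :: ·) (sTerm π (b::σ) s i)
            + Multiset.map (b :: ·) (sTerm (a::π) σ s (i+1)) := by
        intro i hi
        simp only [Finset.mem_range] at hi
        simp only [sTerm, List.length_cons]
        have e1 : s + 1 - (i+1) = s - i := by omega
        have e2 : s - i = (s - i - 1) + 1 := by omega
        by_cases hg : i ≤ π.length ∧ s - i ≤ σ.length + 1
        · rw [if_pos ⟨by omega, by omega⟩, if_pos ⟨by omega, by omega⟩, if_pos ⟨by omega, by omega⟩]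
          rw [e1, List.take_succ_cons, List.drop_succ_cons]
          rw [e2, List.take_succ_cons, List.drop_succ_cons]
          have e3 : s - (i+1) = s - i - 1 := by omega
          rw [e3]
          rw [shuffles_cons_cons]
          rw [← Multiset.coe_add, ← Multiset.map_coe, ← Multiset.map_coe]
          rw [Multiset.add_bind, bind_map_comm', bind_map_comm']
          simp only [List.cons_append]
          rw [bind_map_cons, bind_map_cons]
        · rw [if_neg (by omega), if_neg (by omega), if_neg (by omega)]
          simp
      rw [claim0, claimTop, Finset.sum_congr rfl claimMid]
      rw [Finset.sum_add_distrib]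
      abel

lemma countP_map' {α β : Type} (f : α → β) (M : Multiset α) (p : β → Prop) [DecidablePred p] :
    Multiset.countP p (Multiset.map f M) = Multiset.countP (fun x => p (f x)) M := by
  rw [Multiset.countP_map, Multiset.countP_eq_card_filter]

lemma sorted_count_zero (π σ : List ℕ) (h : ¬ (Des π = ∅ ∧ Des σ = ∅)) :
    Multiset.countP (fun τ => Des τ = ∅) ↑(shuffles π σ) = 0 := by
  rw [Multiset.countP_eq_zero]
  intro τ hτ hp
  rw [Multiset.mem_coe] at hτ
  have hsub := shuffles_sublist π σ τ hτ
  rw [Des_eq_empty_iff] at hp; unfold List.Chain' at hp; rw [List.isChain_iff_pairwise] at hp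
  apply h
  constructor <;> rw [Des_eq_empty_iff] <;> unfold List.Chain' <;> rw [List.isChain_iff_pairwise]
  · exact hp.sublist hsub.1
  · exact hp.sublist hsub.2

lemma sorted_count_one : ∀ π σ : List ℕ, (π ++ σ).Nodup →
    Des π = ∅ → Des σ = ∅ →
    Multiset.countP (fun τ => Des τ = ∅) ↑(shuffles π σ) = 1 := by
  intro π σ
  induction π, σ using shuffles.induct with
  | case1 σ =>
    intro _ _ hσ
    rw [shuffles_nil_left]
    rw [show (([σ] : List (List ℕ)) : Multiset (List ℕ)) = σ ::ₘ 0 from rfl, Multiset.countP_cons]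
    simp [hσ]
  | case2 π hne =>
    intro _ hπ _
    rw [shuffles_nil_right]
    rw [show (([π] : List (List ℕ)) : Multiset (List ℕ)) = π ::ₘ 0 from rfl, Multiset.countP_cons]
    simp [hπ]
  | case3 a π b σ ih1 ih2 =>
    intro hnd hπ hσ
    have hπc : (a :: π).Chain' (· ≤ ·) := Des_eq_empty_iff.1 hπ
    have hσc : (b :: σ).Chain' (· ≤ ·) := Des_eq_empty_iff.1 hσ
    have hπp := List.isChain_iff_pairwise.1 hπc
    have hσp := List.isChain_iff_pairwise.1 hσc
    have hab : a ≠ b := by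
      have hd := List.disjoint_of_nodup_append hnd
      intro e
      have h1 : a ∈ a :: π := List.mem_cons_self
      have h2 : a ∈ b :: σ := by rw [e]; exact List.mem_cons_self
      exact hd h1 h2
    have key : ∀ (c : ℕ) (X Y : List ℕ), (∀ y ∈ X ++ Y, c ≤ y) →
        Multiset.countP (fun τ => Des τ = ∅) (Multiset.map (c :: ·) ↑(shuffles X Y))
          = Multiset.countP (fun τ => Des τ = ∅) (↑(shuffles X Y) : Multiset (List ℕ)) := by
      intro c X Y hc
      rw [countP_map']
      apply Multiset.countP_congr rfl
      intro τ hτ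
      rw [Multiset.mem_coe] at hτ
      have hperm := shuffles_perm _ _ _ hτ
      simp only [eq_iff_iff]
      rw [Des_eq_empty_iff, Des_eq_empty_iff]; unfold List.Chain'; rw [List.isChain_cons]
      constructor
      · exact fun h => h.2
      · intro h
        refine ⟨fun y hy => ?_, h⟩
        exact hc y (hperm.mem_iff.1 (List.mem_of_mem_head? hy))
    have zkey : ∀ (c d : ℕ) (X Y : List ℕ), d ∈ X ++ Y → d < c →
        Multiset.countP (fun τ => Des τ = ∅) (Multiset.map (c :: ·) ↑(shuffles X Y)) = 0 := by
      intro c d X Y hd hdc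
      rw [countP_map', Multiset.countP_eq_zero]
      intro τ hτ hp
      rw [Multiset.mem_coe] at hτ
      have hperm := shuffles_perm _ _ _ hτ
      rw [Des_eq_empty_iff] at hp; unfold List.Chain' at hp; rw [List.isChain_iff_pairwise] at hp
      have : d ∈ τ := hperm.mem_iff.2 hd
      have := (List.pairwise_cons.1 hp).1 d this
      omega
    have hnd1 : (π ++ b :: σ).Nodup := by
      have hnd2 := hnd
      rw [List.cons_append, List.nodup_cons] at hnd2
      exact hnd2.2
    have hnd2 : (a :: π ++ σ).Nodup := by
      refine List.Sublist.nodup ?_ hnd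
      exact ((σ.sublist_cons_self b).append_left (a :: π))
    rw [shuffles_cons_cons, ← Multiset.coe_add, ← Multiset.map_coe, ← Multiset.map_coe,
      Multiset.countP_add]
    rcases Nat.lt_or_ge a b with hlt | hge
    · have hle : ∀ y ∈ π ++ b :: σ, a ≤ y := by
        intro y hy
        simp only [List.mem_append, List.mem_cons] at hy
        rcases hy with hy | hy | hy
        · exact List.rel_of_pairwise_cons hπp hy
        · omega
        · have := List.rel_of_pairwise_cons hσp hy; omega
      rw [key a π (b :: σ) hle, zkey b a (a :: π) σ (by simp) hlt]
      rw [ih1 hnd1 (Des_eq_empty_iff.2 hπc.tail) hσ]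
    · have hlt : b < a := by omega
      have hle : ∀ y ∈ (a :: π) ++ σ, b ≤ y := by
        intro y hy
        rcases List.mem_append.1 hy with hy | hy
        · rcases List.mem_cons.1 hy with rfl | hy
          · omega
          · have := List.rel_of_pairwise_cons hπp hy; omega
        · exact List.rel_of_pairwise_cons hσp hy
      rw [key b (a :: π) σ hle, zkey a b π (b :: σ) (by simp) hlt]
      rw [ih2 hnd2 hπ (Des_eq_empty_iff.2 hσc.tail)]

lemma countP_subset_eq_sum_powerset (M : Multiset (Finset ℕ)) (D : Finset ℕ) :
    M.countP (· ⊆ D) = ∑ E ∈ D.powerset, M.countP (· = E) := by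
  induction M using Multiset.induction with
  | empty => simp
  | cons X M ih =>
    rw [Multiset.countP_cons, ih, Finset.sum_congr rfl
      (fun E _ => Multiset.countP_cons (· = E) X M), Finset.sum_add_distrib]
    congr 1
    rw [Finset.sum_ite_eq D.powerset X (fun _ => 1)]
    simp [Finset.mem_powerset]

lemma multiset_eq_of_countP_subset {M M' : Multiset (Finset ℕ)}
    (h : ∀ S : Finset ℕ, M.countP (· ⊆ S) = M'.countP (· ⊆ S)) : M = M' := by
  have key : ∀ (k : ℕ) (D : Finset ℕ), D.card = k →
      M.countP (· = D) = M'.countP (· = D) := by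
    intro k
    induction k using Nat.strong_induction_on with
    | _ k IH =>
      intro D hD
      have h1 := countP_subset_eq_sum_powerset M D
      have h2 := countP_subset_eq_sum_powerset M' D
      have hmem : D ∈ D.powerset := Finset.mem_powerset_self D
      rw [← Finset.sum_erase_add _ _ hmem] at h1 h2
      have h3 : ∑ E ∈ D.powerset.erase D, M.countP (· = E)
          = ∑ E ∈ D.powerset.erase D, M'.countP (· = E) := by
        apply Finset.sum_congr rfl
        intro E hE
        have hE1 := Finset.mem_erase.1 hE
        have hE2 : E ⊆ D := Finset.mem_powerset.1 hE1.2
        have : E.card < k := by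
          rw [← hD]
          exact Finset.card_lt_card (lt_of_le_of_ne hE2 hE1.1)
        exact IH E.card this E rfl
      rw [h D, h3] at h1
      omega
  rw [Multiset.ext]
  intro D
  have e1 : M.count D = M.countP (· = D) := by
    rw [Multiset.count]
    exact Multiset.countP_congr rfl (fun x _ => by simp [eq_comm])
  have e2 : M'.count D = M'.countP (· = D) := by
    rw [Multiset.count]
    exact Multiset.countP_congr rfl (fun x _ => by simp [eq_comm])
  rw [e1, e2]
  exact key D.card D rfl

lemma shuffle_length {π σ τ : List ℕ} (h : τ ∈ shuffles π σ) :
    τ.length = π.length + σ.length := by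
  rw [(shuffles_perm π σ τ h).length_eq, List.length_append]

lemma countP_msum {α : Type} (p : α → Prop) [DecidablePred p] (t : Finset ℕ)
    (g : ℕ → Multiset α) :
    Multiset.countP p (∑ j ∈ t, g j) = ∑ j ∈ t, Multiset.countP p (g j) := by
  induction t using Finset.cons_induction with
  | empty => simp
  | cons a t ha ih => simp [Finset.sum_insert ha, Multiset.countP_add, ih]

lemma countP_bind {α β : Type} (p : β → Prop) [DecidablePred p] (M : Multiset α)
    (f : α → Multiset β) :
    Multiset.countP p (M.bind f) = (M.map (fun a => Multiset.countP p (f a))).sum := by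
  induction M using Multiset.induction with
  | empty => simp
  | cons a M ih => simp [Multiset.cons_bind, Multiset.countP_add, ih]

lemma sum_map_ite {α : Type} (A : Multiset α) (q : α → Prop) [DecidablePred q] (c : ℕ) :
    (A.map (fun a => if q a then c else 0)).sum = c * A.countP q := by
  induction A using Multiset.induction with
  | empty => simp
  | cons a A ih =>
    rw [Multiset.map_cons, Multiset.sum_cons, ih, Multiset.countP_cons]
    by_cases h : q a <;> simp [h] <;> ring

lemma term_count (π σ : List ℕ) (S : Finset ℕ) (s j : ℕ) (hj : j ≤ s)
    (hg : j ≤ π.length ∧ s - j ≤ σ.length) (hsS : s ∈ S) (hmax : ∀ i ∈ S, i ≤ s) :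
    Multiset.countP (fun τ => Des τ ⊆ S) (sTerm π σ s j)
      = Multiset.countP (fun α => Des α ⊆ S.erase s)
          (↑(shuffles (π.take j) (σ.take (s-j))) : Multiset (List ℕ))
        * Multiset.countP (fun β => Des β = ∅)
          (↑(shuffles (π.drop j) (σ.drop (s-j))) : Multiset (List ℕ)) := by
  rw [sTerm, if_pos hg, countP_bind]
  have step : ∀ α ∈ (↑(shuffles (π.take j) (σ.take (s-j))) : Multiset (List ℕ)),
      (fun a => Multiset.countP (fun τ => Des τ ⊆ S)
        (Multiset.map (fun β => a ++ β) (↑(shuffles (π.drop j) (σ.drop (s-j))) : Multiset (List ℕ)))) α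
      = (fun a => if Des a ⊆ S.erase s then Multiset.countP (fun β => Des β = ∅)
          (↑(shuffles (π.drop j) (σ.drop (s-j))) : Multiset (List ℕ)) else 0) α := by
    intro α hα
    simp only
    rw [countP_map']
    have hlen : α.length = s := by
      rw [shuffle_length (Multiset.mem_coe.1 hα), List.length_take, List.length_take]
      omega
    have hiff : ∀ β : List ℕ, (Des (α ++ β) ⊆ S) ↔ (Des α ⊆ S ∧ Des β = ∅) :=
      fun β => Des_append_subset_iff hlen hsS hmax
    have herase : Des α ⊆ S ↔ Des α ⊆ S.erase s := by
      constructor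
      · intro h i hi
        rw [Finset.mem_erase]
        refine ⟨?_, h hi⟩
        have h2 := (mem_Des.1 hi).2.1
        rw [hlen] at h2
        omega
      · intro h
        exact h.trans (Finset.erase_subset _ _)
    by_cases hc : Des α ⊆ S.erase s
    · rw [if_pos hc]
      apply Multiset.countP_congr rfl
      intro β _
      simp only [eq_iff_iff]
      rw [hiff β]
      have h3 : Des α ⊆ S := herase.2 hc
      tauto
    · rw [if_neg hc, Multiset.countP_eq_zero]
      intro β _ hp
      exact hc (herase.1 ((hiff β).1 hp).1)
  rw [Multiset.map_congr rfl step, sum_map_ite]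
  ring

lemma countA : ∀ (k : ℕ) (S : Finset ℕ) (π π' σ σ' : List ℕ), S.card = k →
    π.length = π'.length → σ.length = σ'.length →
    Des π = Des π' → Des σ = Des σ' →
    (π ++ σ).Nodup → (π' ++ σ').Nodup →
    Multiset.countP (fun τ => Des τ ⊆ S) ↑(shuffles π σ)
      = Multiset.countP (fun τ => Des τ ⊆ S) ↑(shuffles π' σ') := by
  intro k
  induction k using Nat.strong_induction_on with
  | _ k IH =>
  intro S π π' σ σ' hk hl1 hl2 hd1 hd2 hnd hnd'
  have hcongrU : ∀ (X Y : List ℕ) (T : Finset ℕ), X.length + Y.length = π.length + σ.length →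
      Multiset.countP (fun τ => Des τ ⊆ T) (↑(shuffles X Y) : Multiset (List ℕ))
        = Multiset.countP (fun τ => Des τ ⊆ T ∩ Finset.Ico 1 (π.length + σ.length))
            (↑(shuffles X Y) : Multiset (List ℕ)) := by
    intro X Y T hXY
    apply Multiset.countP_congr rfl
    intro τ hτ
    have hτl : τ.length = π.length + σ.length := by
      rw [shuffle_length (Multiset.mem_coe.1 hτ)]; exact hXY
    simp only [eq_iff_iff]
    constructor
    · intro h
      intro i hi
      rw [Finset.mem_inter]
      refine ⟨h hi, ?_⟩
      have := Des_subset_Ico τ hi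
      rwa [hτl] at this
    · intro h
      exact h.trans (Finset.inter_subset_left)
  by_cases hU : S ⊆ Finset.Ico 1 (π.length + σ.length)
  · by_cases hSe : S = ∅
    · subst hSe
      have e : ∀ (X Y : List ℕ),
          Multiset.countP (fun τ => Des τ ⊆ (∅ : Finset ℕ)) (↑(shuffles X Y) : Multiset (List ℕ))
            = Multiset.countP (fun τ => Des τ = ∅) (↑(shuffles X Y) : Multiset (List ℕ)) := by
        intro X Y
        apply Multiset.countP_congr rfl
        intro τ _
        simp [Finset.subset_empty]
      rw [e, e]
      by_cases hDE : Des π = ∅ ∧ Des σ = ∅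
      · rw [sorted_count_one π σ hnd hDE.1 hDE.2,
          sorted_count_one π' σ' hnd' (by rw [← hd1]; exact hDE.1) (by rw [← hd2]; exact hDE.2)]
      · rw [sorted_count_zero π σ hDE, sorted_count_zero π' σ'
          (by rw [← hd1, ← hd2]; exact hDE)]
    · -- S nonempty and inside the interval
      have hne : S.Nonempty := Finset.nonempty_iff_ne_empty.2 hSe
      set s := S.max' hne with hsdef
      have hs : s ∈ S := S.max'_mem hne
      have hmax : ∀ i ∈ S, i ≤ s := fun i hi => S.le_max' i hi
      have hsN : s < π.length + σ.length := (Finset.mem_Ico.1 (hU hs)).2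
      rw [shuffles_split s π σ (by omega), shuffles_split s π' σ' (by omega),
        countP_msum, countP_msum]
      apply Finset.sum_congr rfl
      intro j hj
      rw [Finset.mem_range] at hj
      by_cases hg : j ≤ π.length ∧ s - j ≤ σ.length
      · have hg' : j ≤ π'.length ∧ s - j ≤ σ'.length := by
          rw [← hl1, ← hl2]; exact hg
        rw [term_count π σ S s j (by omega) hg hs hmax,
          term_count π' σ' S s j (by omega) hg' hs hmax]
        have factor1 : Multiset.countP (fun α => Des α ⊆ S.erase s)
              (↑(shuffles (π.take j) (σ.take (s-j))) : Multiset (List ℕ))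
            = Multiset.countP (fun α => Des α ⊆ S.erase s)
              (↑(shuffles (π'.take j) (σ'.take (s-j))) : Multiset (List ℕ)) := by
          apply IH (S.erase s).card ?_ (S.erase s) _ _ _ _ rfl ?_ ?_ ?_ ?_ ?_ ?_
          · have h1 : (S.erase s).card = S.card - 1 := Finset.card_erase_of_mem hs
            have h2 : 0 < S.card := Finset.card_pos.2 hne
            omega
          · rw [List.length_take, List.length_take, hl1]
          · rw [List.length_take, List.length_take, hl2]
          · rw [Des_take, Des_take, hd1]
          · rw [Des_take, Des_take, hd2]
          · exact (List.Sublist.append (List.take_sublist j π) (List.take_sublist (s-j) σ)).nodup hnd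
          · exact (List.Sublist.append (List.take_sublist j π') (List.take_sublist (s-j) σ')).nodup hnd'
        have e : ∀ (X Y : List ℕ),
            Multiset.countP (fun β => Des β = ∅) (↑(shuffles X Y) : Multiset (List ℕ))
              = Multiset.countP (fun β => Des β ⊆ (∅ : Finset ℕ)) (↑(shuffles X Y) : Multiset (List ℕ)) := by
          intro X Y
          apply Multiset.countP_congr rfl
          intro τ _
          simp [Finset.subset_empty]
        have factor2 : Multiset.countP (fun β => Des β = ∅)
              (↑(shuffles (π.drop j) (σ.drop (s-j))) : Multiset (List ℕ))
            = Multiset.countP (fun β => Des β = ∅)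
              (↑(shuffles (π'.drop j) (σ'.drop (s-j))) : Multiset (List ℕ)) := by
          rw [e, e]
          apply IH 0 ?_ ∅ _ _ _ _ rfl ?_ ?_ ?_ ?_ ?_ ?_
          · have h2 : 0 < S.card := Finset.card_pos.2 hne
            omega
          · rw [List.length_drop, List.length_drop, hl1]
          · rw [List.length_drop, List.length_drop, hl2]
          · rw [Des_drop, Des_drop, hd1]
          · rw [Des_drop, Des_drop, hd2]
          · exact (List.Sublist.append (List.drop_sublist j π) (List.drop_sublist (s-j) σ)).nodup hnd
          · exact (List.Sublist.append (List.drop_sublist j π') (List.drop_sublist (s-j) σ')).nodup hnd'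
        rw [factor1, factor2]
      · have hg' : ¬ (j ≤ π'.length ∧ s - j ≤ σ'.length) := by
          rw [← hl1, ← hl2]; exact hg
        rw [sTerm, if_neg hg, sTerm, if_neg hg']
  · -- reduce to S ∩ Ico
    have hlt : (S ∩ Finset.Ico 1 (π.length + σ.length)).card < k := by
      rw [← hk]
      apply Finset.card_lt_card
      rw [Finset.ssubset_iff_of_subset (Finset.inter_subset_left)]
      rw [Finset.not_subset] at hU
      obtain ⟨x, hx1, hx2⟩ := hU
      exact ⟨x, hx1, fun hx3 => hx2 (Finset.mem_of_mem_inter_right hx3)⟩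
    rw [hcongrU π σ S rfl, hcongrU π' σ' S (by omega)]
    exact IH _ hlt _ π π' σ σ' rfl hl1 hl2 hd1 hd2 hnd hnd'

/-- The descent set statistic `Des` is shuffle compatible. -/
theorem stmt4 : ShuffleCompatible Des := by
  intro π π' σ σ' hπ hπ' hσ hσ' hl1 hl2 hdis hdis' hd1 hd2
  have hnd : (π ++ σ).Nodup := List.Nodup.append hπ.1 hσ.1 hdis
  have hnd' : (π' ++ σ').Nodup := List.Nodup.append hπ'.1 hσ'.1 hdis'
  rw [← Multiset.map_coe, ← Multiset.map_coe]
  apply multiset_eq_of_countP_subset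
  intro S
  rw [countP_map', countP_map']
  exact countA S.card S π π' σ σ' rfl hl1 hl2 hd1 hd2 hnd hnd'
end

section
/- Let π, π' be permutations of [m] and σ a permutation of {m+1,...,m+n}. Let Φ: π ⧢ σ → π' ⧢ σ be the map that replaces the entries of π in a shuffle by the entries of π' in the same positions and order. If Pk(π) = Pk(π') then Φ preserves the peak set: Pk(Φ(τ)) = Pk(τ) for every shuffle τ. -/
/-- Replace the entries `≤ m` of a word, in order, by the entries of `ρ`. -/
def replaceLow (m : ℕ) : List ℕ → List ℕ → List ℕ
  | _, [] => []
  | ρ, x :: xs =>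
      if x ≤ m then ρ.headD 0 :: replaceLow m ρ.tail xs else x :: replaceLow m ρ xs

lemma shuffles_filter (p : ℕ → Bool) : ∀ (π σ τ : List ℕ), τ ∈ shuffles π σ →
    (∀ x ∈ π, p x = true) → (∀ x ∈ σ, p x = false) → τ.filter p = π
  | [], σ, τ, h, _, hσ => by
      simp [shuffles] at h
      subst h
      simp [List.filter_eq_nil_iff]
      intro x hx
      simp [hσ x hx]
  | a :: π, [], τ, h, hπ, _ => by
      simp [shuffles] at h
      subst h
      rw [List.filter_eq_self]
      exact hπ
  | a :: π, b :: σ, τ, h, hπ, hσ => by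
      rw [shuffles] at h
      simp only [List.mem_append, List.mem_map] at h
      rcases h with ⟨τ₀, h₀, rfl⟩ | ⟨τ₀, h₀, rfl⟩
      · rw [List.filter_cons_of_pos (hπ a (by simp))]
        rw [shuffles_filter p π (b :: σ) τ₀ h₀ (fun x hx => hπ x (by simp [hx])) hσ]
      · rw [List.filter_cons_of_neg (by simp [hσ b (by simp)])]
        exact shuffles_filter p (a :: π) σ τ₀ h₀ hπ (fun x hx => hσ x (by simp [hx]))
  termination_by π σ => π.length + σ.length

lemma replaceLow_spec (m : ℕ) : ∀ (xs ρ : List ℕ), (∀ y ∈ ρ, y ≤ m) →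
    xs.countP (fun x => x ≤ m) ≤ ρ.length →
    (replaceLow m ρ xs).length = xs.length ∧
    (replaceLow m ρ xs).filter (fun x => x ≤ m) = ρ.take (xs.countP (fun x => x ≤ m)) ∧
    ∀ i < xs.length, (¬ xs.getD i 0 ≤ m → (replaceLow m ρ xs).getD i 0 = xs.getD i 0) ∧
      (xs.getD i 0 ≤ m → (replaceLow m ρ xs).getD i 0 ≤ m)
  | [], ρ, hρ, hc => by simp [replaceLow]
  | x :: xs, ρ, hρ, hc => by
      by_cases hx : x ≤ m
      · have hc1 : xs.countP (fun x => decide (x ≤ m)) + 1 ≤ ρ.length := by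
          rw [List.countP_cons] at hc; simpa [hx] using hc
        obtain ⟨y, ρt, rfl⟩ : ∃ y ρt, ρ = y :: ρt := by
          cases ρ with
          | nil => simp at hc1
          | cons y ρt => exact ⟨y, ρt, rfl⟩
        have hy : y ≤ m := hρ y (by simp)
        have IH := replaceLow_spec m xs ρt (fun z hz => hρ z (by simp [hz]))
          (by simpa using hc1)
        rw [replaceLow, if_pos hx]
        simp only [List.headD, List.tail]
        refine ⟨by simp [IH.1], ?_, ?_⟩
        · rw [List.filter_cons_of_pos (by simpa using hy), List.countP_cons]
          simp [hx, IH.2.1]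
        · intro i hi
          cases i with
          | zero => simp [hx, hy]
          | succ j =>
              simp only [List.getD_cons_succ]
              exact IH.2.2 j (by simpa using hi)
      · have IH := replaceLow_spec m xs ρ hρ
          (by rw [List.countP_cons] at hc; simpa [hx] using hc)
        rw [replaceLow, if_neg hx]
        refine ⟨by simp [IH.1], ?_, ?_⟩
        · rw [List.filter_cons_of_neg (by simpa using hx), List.countP_cons]
          simp [hx, IH.2.1]
        · intro i hi
          cases i with
          | zero => simp [hx]
          | succ j =>
              simp only [List.getD_cons_succ]
              exact IH.2.2 j (by simpa using hi)

lemma filter_getD (p : ℕ → Bool) : ∀ (l : List ℕ) (j : ℕ), j < l.length → p (l.getD j 0) →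
    (l.filter p).getD ((l.take j).countP p) 0 = l.getD j 0 ∧
    (l.take j).countP p < (l.filter p).length
  | [], j, hj, _ => by simp at hj
  | x :: xs, 0, hj, hp => by
      simp only [List.getD_cons_zero] at hp ⊢
      simp [List.filter_cons_of_pos hp]
  | x :: xs, j + 1, hj, hp => by
      simp only [List.getD_cons_succ] at hp ⊢
      have IH := filter_getD p xs j (by simpa using hj) hp
      by_cases hx : p x
      · rw [List.filter_cons_of_pos hx, List.take_succ_cons, List.countP_cons_of_pos hx]
        exact ⟨by simpa using IH.1, by simp; omega⟩
      · rw [List.filter_cons_of_neg hx, List.take_succ_cons]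
        rw [List.countP_cons_of_neg hx]
        exact IH

lemma countP_take_congr (p : ℕ → Bool) (l l' : List ℕ) (hlen : l'.length = l.length)
    (h : ∀ i < l.length, p (l.getD i 0) = p (l'.getD i 0)) :
    ∀ j, j ≤ l.length → (l.take j).countP p = (l'.take j).countP p := by
  intro j hj
  induction j with
  | zero => simp
  | succ k IH =>
      have hk : k < l.length := by omega
      rw [List.take_succ, List.take_succ]
      rw [List.countP_append, List.countP_append, IH (by omega)]
      congr 1
      rw [List.getElem?_eq_getElem hk, List.getElem?_eq_getElem (by omega : k < l'.length)]
      simp only [Option.toList_some, List.countP_cons, List.countP_nil]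
      have := h k hk
      rw [List.getD_eq_getElem _ _ hk, List.getD_eq_getElem _ _ (by omega : k < l'.length)] at this
      simp [this]

lemma low_getDs (m : ℕ) (τ π : List ℕ) (hf : τ.filter (fun x => x ≤ m) = π)
    (i : ℕ) (h2 : 2 ≤ i) (hil : i < τ.length)
    (ha : τ.getD (i-2) 0 ≤ m) (hb : τ.getD (i-1) 0 ≤ m) (hc : τ.getD i 0 ≤ m) :
    1 ≤ (τ.take (i-1)).countP (fun x => x ≤ m) ∧
    (τ.take (i-1)).countP (fun x => x ≤ m) + 1 < π.length ∧
    π.getD ((τ.take (i-1)).countP (fun x => x ≤ m) - 1) 0 = τ.getD (i-2) 0 ∧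
    π.getD ((τ.take (i-1)).countP (fun x => x ≤ m)) 0 = τ.getD (i-1) 0 ∧
    π.getD ((τ.take (i-1)).countP (fun x => x ≤ m) + 1) 0 = τ.getD i 0 := by
  set p : ℕ → Bool := fun x => decide (x ≤ m) with hp
  set k := (τ.take (i-1)).countP p with hk
  have hi2 : i - 2 < τ.length := by omega
  have hi1 : i - 1 < τ.length := by omega
  have hk1 : k = (τ.take (i-2)).countP p + 1 := by
    rw [hk, show i - 1 = (i-2) + 1 by omega, List.take_succ, List.countP_append,
      List.getElem?_eq_getElem hi2]
    have e : τ[i-2] = τ.getD (i-2) 0 := (List.getD_eq_getElem _ _ hi2).symm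
    simp only [Option.toList_some, List.countP_cons, List.countP_nil, e, hp]
    rw [if_pos (by simpa using ha : decide (τ.getD (i-2) 0 ≤ m) = true)]
  have hk2 : (τ.take i).countP p = k + 1 := by
    rw [show i = (i-1) + 1 by omega, List.take_succ, List.countP_append,
      List.getElem?_eq_getElem hi1]
    have e : τ[i-1] = τ.getD (i-1) 0 := (List.getD_eq_getElem _ _ hi1).symm
    simp only [Option.toList_some, List.countP_cons, List.countP_nil, e, hp]
    rw [if_pos (by simpa using hb : decide (τ.getD (i-1) 0 ≤ m) = true)]
  have F1 := filter_getD p τ (i-1) hi1 (by simpa [hp] using hb)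
  have F0 := filter_getD p τ (i-2) hi2 (by simpa [hp] using ha)
  have F2 := filter_getD p τ i hil (by simpa [hp] using hc)
  rw [hf] at F0 F1 F2
  rw [hk2] at F2
  have e0 : (τ.take (i-2)).countP p = k - 1 := by omega
  rw [e0] at F0
  exact ⟨by omega, F2.2, F0.1, F1.1, F2.1⟩

lemma pk_congr (m : ℕ) (π π' τ τ' : List ℕ)
    (hlen : τ'.length = τ.length)
    (hmask : ∀ i < τ.length, (τ.getD i 0 ≤ m ↔ τ'.getD i 0 ≤ m))
    (hhigh : ∀ i < τ.length, ¬ τ.getD i 0 ≤ m → τ'.getD i 0 = τ.getD i 0)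
    (hfτ : τ.filter (fun x => x ≤ m) = π) (hfτ' : τ'.filter (fun x => x ≤ m) = π')
    (hPk : Pk π = Pk π') : Pk τ' = Pk τ := by
  have hmaskB : ∀ i < τ.length,
      (fun x => decide (x ≤ m)) (τ.getD i 0) = (fun x => decide (x ≤ m)) (τ'.getD i 0) := by
    intro i hi
    simp only []; exact decide_eq_decide.mpr (hmask i hi)
  ext i
  simp only [Pk, Finset.mem_filter, Finset.mem_Ico, hlen]
  constructor
  all_goals rintro ⟨⟨h2, hil⟩, hcond⟩
  all_goals refine ⟨⟨h2, hil⟩, ?_⟩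
  all_goals have hi2 : i - 2 < τ.length := by omega
  all_goals have hi1 : i - 1 < τ.length := by omega
  all_goals by_cases hb : τ.getD (i-1) 0 ≤ m
  -- we handle the four goals uniformly below
  all_goals first
  | -- case b high : all comparisons unchanged
    (have hb' := hhigh (i-1) hi1 hb
     have ha : τ'.getD (i-2) 0 < τ'.getD (i-1) 0 ↔ τ.getD (i-2) 0 < τ.getD (i-1) 0 := by
       by_cases haL : τ.getD (i-2) 0 ≤ m
       · have := (hmask (i-2) hi2).mp haL
         rw [hb']
         constructor <;> intro <;> omega
       · rw [hb', hhigh (i-2) hi2 haL]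
     have hc : τ'.getD i 0 < τ'.getD (i-1) 0 ↔ τ.getD i 0 < τ.getD (i-1) 0 := by
       by_cases hcL : τ.getD i 0 ≤ m
       · have := (hmask i (by omega)).mp hcL
         rw [hb']
         constructor <;> intro <;> omega
       · rw [hb', hhigh i (by omega) hcL]
     first
     | exact ⟨ha.mp hcond.1, hc.mp hcond.2⟩
     | exact ⟨ha.mpr hcond.1, hc.mpr hcond.2⟩)
  | skip
  -- remaining: b low, both directions
  all_goals (
    have hb'm := (hmask (i-1) hi1).mp hb
    by_cases haL : τ.getD (i-2) 0 ≤ m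
    case neg =>
      have ha' := hhigh (i-2) hi2 haL
      have hc1 := hcond.1
      exfalso; omega
    all_goals by_cases hcL : τ.getD i 0 ≤ m
    case neg =>
      have hc' := hhigh i (by omega) hcL
      have hc2 := hcond.2
      exfalso; omega
    all_goals (
      have K := low_getDs m τ π hfτ i h2 hil haL hb hcL
      have K' := low_getDs m τ' π' hfτ' i h2 (by omega) ((hmask _ hi2).mp haL)
        hb'm ((hmask _ (by omega)).mp hcL)
      have hkk : (τ'.take (i-1)).countP (fun x => x ≤ m)
          = (τ.take (i-1)).countP (fun x => x ≤ m) :=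
        (countP_take_congr _ τ τ' hlen hmaskB (i-1) (by omega)).symm
      rw [hkk] at K'
      set k := (τ.take (i-1)).countP (fun x => x ≤ m) with hkdef
      obtain ⟨kk1, kk2, e0, e1, e2⟩ := K
      obtain ⟨_, kk2', e0', e1', e2'⟩ := K'
      have h1 : (τ.getD (i-2) 0 < τ.getD (i-1) 0 ∧ τ.getD i 0 < τ.getD (i-1) 0)
          ↔ k + 1 ∈ Pk π := by
        simp only [Pk, Finset.mem_filter, Finset.mem_Ico,
          show k + 1 - 2 = k - 1 by omega, Nat.add_sub_cancel, e0, e1, e2]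
        exact ⟨fun h => ⟨⟨by omega, kk2⟩, h⟩, fun h => h.2⟩
      have h1' : (τ'.getD (i-2) 0 < τ'.getD (i-1) 0 ∧ τ'.getD i 0 < τ'.getD (i-1) 0)
          ↔ k + 1 ∈ Pk π' := by
        simp only [Pk, Finset.mem_filter, Finset.mem_Ico,
          show k + 1 - 2 = k - 1 by omega, Nat.add_sub_cancel, e0', e1', e2']
        exact ⟨fun h => ⟨⟨by omega, kk2'⟩, h⟩, fun h => h.2⟩
      have hIff := h1.trans (Iff.trans (by rw [hPk]) h1'.symm)
      first
      | exact hIff.mp hcond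
      | exact hIff.mpr hcond))

/-- If `Pk π = Pk π'` then the fundamental bijection `Φ` (replacing the entries
of `π` by those of `π'` in the same positions) preserves the peak set. -/
theorem stmt5 (m n : ℕ) (π π' σ : List ℕ)
    (hπ : π.Nodup) (hπ' : π'.Nodup) (hσ : σ.Nodup)
    (hπS : π.toFinset = Finset.Icc 1 m) (hπ'S : π'.toFinset = Finset.Icc 1 m)
    (hσS : σ.toFinset = Finset.Icc (m+1) (m+n))
    (hPk : Pk π = Pk π') :
    ∀ τ ∈ shuffles π σ, Pk (replaceLow m π' τ) = Pk τ := by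
  intro τ hτ
  have hπlen : π.length = m := by
    rw [← List.toFinset_card_of_nodup hπ, hπS, Nat.card_Icc]; omega
  have hπ'len : π'.length = m := by
    rw [← List.toFinset_card_of_nodup hπ', hπ'S, Nat.card_Icc]; omega
  have hπlow : ∀ x ∈ π, x ≤ m := by
    intro x hx
    have : x ∈ π.toFinset := List.mem_toFinset.mpr hx
    rw [hπS, Finset.mem_Icc] at this
    exact this.2
  have hπ'low : ∀ x ∈ π', x ≤ m := by
    intro x hx
    have : x ∈ π'.toFinset := List.mem_toFinset.mpr hx
    rw [hπ'S, Finset.mem_Icc] at this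
    exact this.2
  have hσhigh : ∀ x ∈ σ, ¬ x ≤ m := by
    intro x hx
    have : x ∈ σ.toFinset := List.mem_toFinset.mpr hx
    rw [hσS, Finset.mem_Icc] at this
    omega
  have hfτ : τ.filter (fun x => x ≤ m) = π :=
    shuffles_filter _ π σ τ hτ (fun x hx => by simpa using hπlow x hx)
      (fun x hx => by simpa using hσhigh x hx)
  have hcount : τ.countP (fun x => x ≤ m) = m := by
    have := congrArg List.length hfτ
    rw [← List.countP_eq_length_filter] at this
    rw [this, hπlen]
  have spec := replaceLow_spec m τ π' hπ'low (by rw [hcount, hπ'len])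
  set τ' := replaceLow m π' τ with hτ'
  have hfτ' : τ'.filter (fun x => x ≤ m) = π' := by
    rw [spec.2.1, hcount, ← hπ'len, List.take_length]
  refine pk_congr m π π' τ τ' spec.1 ?_ (fun i hi h => (spec.2.2 i hi).1 h) hfτ hfτ' hPk
  intro i hi
  constructor
  · exact (spec.2.2 i hi).2
  · intro h
    by_contra hcon
    rw [(spec.2.2 i hi).1 hcon] at h
    exact hcon h
end

section
/- The descent number statistic des is shuffle compatible. -/
/-- number of "descents" of `p :: τ` -/
def dw : ℕ → List ℕ → ℕ
  | _, [] => 0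
  | p, a :: τ => (if a < p then 1 else 0) + dw a τ

/-- number of compatible labelings: sequences `f` along `τ` with values in `[lb, q]`,
weakly increasing, strictly where the previous letter is bigger; `p` is the previous
letter, `v` the previous value. -/
def Ecomp (q : ℕ) : ℕ → ℕ → List ℕ → ℕ
  | _, _, [] => 1
  | p, v, a :: τ => ∑ y ∈ Finset.Icc (if a < p then v + 1 else v) q, Ecomp q a y τ
  termination_by _ _ τ => τ.length

lemma dw_le (p : ℕ) (τ : List ℕ) : dw p τ ≤ τ.length := by
  induction τ generalizing p with
  | nil => simp [dw]
  | cons a t ih =>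
    simp only [dw, List.length_cons]
    have := ih a
    split <;> omega

lemma sum_choose (c m n : ℕ) (h : m ≤ n) :
    ∑ j ∈ Finset.range c, Nat.choose (m + j) n = Nat.choose (m + c) (n + 1) := by
  induction c with
  | zero =>
    simp [Nat.choose_eq_zero_of_lt (lt_of_le_of_lt h (Nat.lt_succ_self n))]
  | succ c ih =>
    rw [Finset.sum_range_succ, ih]
    have : m + (c + 1) = (m + c) + 1 := by omega
    rw [this, Nat.choose_succ_succ' (m + c) n]
    omega

lemma Ecomp_eq (q p v : ℕ) (τ : List ℕ) :
    Ecomp q p v τ = Nat.choose (q + τ.length - (dw p τ + v)) τ.length := by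
  induction τ generalizing p v with
  | nil => simp [Ecomp, dw]
  | cons a t ih =>
    rw [Ecomp]
    set lb := if a < p then v + 1 else v with hlb
    have hKn := dw_le a t
    set n := t.length
    set K := dw a t
    have hdw : dw p (a :: t) = (if a < p then 1 else 0) + K := rfl
    have hlen : (a :: t).length = n + 1 := rfl
    rw [hdw, hlen]
    have hlbv : dw p (a :: t) + v = K + lb := by rw [hdw, hlb]; split <;> omega
    have hgoal : q + (n + 1) - ((if a < p then 1 else 0) + K + v) =
        q + (n + 1) - (K + lb) := by rw [hlb]; split <;> omega
    rw [hgoal]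
    by_cases hq : lb ≤ q
    · calc ∑ y ∈ Finset.Icc lb q, Ecomp q a y t
          = ∑ y ∈ Finset.Ico lb (q+1), Nat.choose (q + n - (K + y)) n := by
            rw [← Finset.Ico_add_one_right_eq_Icc]
            exact Finset.sum_congr rfl fun y _ => ih a y
        _ = ∑ j ∈ Finset.range (q + 1 - lb), Nat.choose (q + n - (K + (lb + j))) n := by
            rw [Finset.sum_Ico_eq_sum_range]
        _ = ∑ j ∈ Finset.range (q + 1 - lb), Nat.choose ((n - K) + j) n := by
            rw [← Finset.sum_range_reflect]
            refine Finset.sum_congr rfl fun j hj => ?_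
            have hj' := Finset.mem_range.mp hj
            congr 1
            omega
        _ = Nat.choose ((n - K) + (q + 1 - lb)) (n + 1) := sum_choose _ _ _ (by omega)
        _ = Nat.choose (q + (n + 1) - (K + lb)) (n + 1) := by congr 1; omega
    · rw [Finset.Icc_eq_empty (by omega), Finset.sum_empty]
      rw [eq_comm, Nat.choose_eq_zero_iff]
      omega

lemma rect' (A B : ℕ → ℕ) (q la lb : ℕ) (h1 : lb ≤ la) (h2 : la ≤ lb + 1) :
    (∑ y ∈ Finset.Icc la q, A y * ∑ z ∈ Finset.Icc y q, B z)
      + (∑ z ∈ Finset.Icc lb q, (∑ y ∈ Finset.Icc (z+1) q, A y) * B z)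
    = (∑ y ∈ Finset.Icc la q, A y) * (∑ z ∈ Finset.Icc lb q, B z) := by
  have t1 : (∑ y ∈ Finset.Icc la q, A y * ∑ z ∈ Finset.Icc y q, B z)
      = ∑ y ∈ Finset.Icc la q, ∑ z ∈ Finset.Icc lb q,
          if y ≤ z then A y * B z else 0 := by
    refine Finset.sum_congr rfl fun y hy => ?_
    have hy' := Finset.mem_Icc.mp hy
    rw [Finset.mul_sum, ← Finset.sum_filter]
    refine Finset.sum_congr ?_ fun z _ => rfl
    ext z
    simp only [Finset.mem_Icc, Finset.mem_filter]
    omega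
  have t2 : (∑ z ∈ Finset.Icc lb q, (∑ y ∈ Finset.Icc (z+1) q, A y) * B z)
      = ∑ y ∈ Finset.Icc la q, ∑ z ∈ Finset.Icc lb q,
          if ¬ y ≤ z then A y * B z else 0 := by
    rw [Finset.sum_comm]
    refine Finset.sum_congr rfl fun z hz => ?_
    have hz' := Finset.mem_Icc.mp hz
    rw [Finset.sum_mul, ← Finset.sum_filter]
    refine Finset.sum_congr ?_ fun y _ => rfl
    ext y
    simp only [Finset.mem_Icc, Finset.mem_filter]
    omega
  rw [t1, t2, ← Finset.sum_add_distrib]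
  rw [Finset.sum_mul_sum]
  refine Finset.sum_congr rfl fun y _ => ?_
  rw [← Finset.sum_add_distrib]
  refine Finset.sum_congr rfl fun z _ => ?_
  by_cases h : y ≤ z <;> simp [h]

lemma list_sum_finset_sum (s : Finset ℕ) (l : List (List ℕ)) (g : ℕ → List ℕ → ℕ) :
    (l.map (fun τ => ∑ y ∈ s, g y τ)).sum = ∑ y ∈ s, (l.map (g y)).sum := by
  induction l with
  | nil => simp
  | cons h t ih => simp [ih, Finset.sum_add_distrib]

lemma shuffles_length : ∀ (π σ τ : List ℕ), τ ∈ shuffles π σ →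
    τ.length = π.length + σ.length := by
  intro π σ
  induction π, σ using shuffles.induct with
  | case1 σ => intro τ hτ; simp [shuffles] at hτ; simp [hτ]
  | case2 π h => intro τ hτ
                 cases π with
                 | nil => simp [shuffles] at hτ; simp [hτ]
                 | cons a t => simp [shuffles] at hτ; simp [hτ]
  | case3 a π b σ ih1 ih2 =>
    intro τ hτ
    rw [shuffles] at hτ
    simp only [List.mem_append, List.mem_map] at hτ
    rcases hτ with ⟨τ', hτ', rfl⟩ | ⟨τ', hτ', rfl⟩
    · have := ih1 τ' hτ'; simp at this ⊢; omega
    · have := ih2 τ' hτ'; simp at this ⊢; omega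
lemma Eshuf (q : ℕ) : ∀ (π σ : List ℕ), π.Disjoint σ → ∀ (p v : ℕ),
    ((shuffles π σ).map (fun τ => Ecomp q p v τ)).sum
      = Ecomp q p v π * Ecomp q p v σ := by
  intro π σ
  induction π, σ using shuffles.induct with
  | case1 σ => intro _ p v; simp [shuffles, Ecomp]
  | case2 π h =>
    intro _ p v
    cases π with
    | nil => simp [shuffles, Ecomp]
    | cons a t => simp [shuffles, Ecomp]
  | case3 a π b σ ih1 ih2 =>
    intro hd p v
    have hab : a ≠ b := fun h => hd List.mem_cons_self (by rw [h]; exact List.mem_cons_self)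
    have hd1 : π.Disjoint (b :: σ) := fun x hx hx' => hd (by simp [hx]) hx'
    have hd2 : (a :: π).Disjoint σ := fun x hx hx' => hd hx (by simp [hx'])
    rw [shuffles, List.map_append, List.sum_append, List.map_map, List.map_map]
    have e1 : ((shuffles π (b :: σ)).map ((fun τ => Ecomp q p v τ) ∘ (a :: ·))).sum
        = ∑ y ∈ Finset.Icc (if a < p then v + 1 else v) q,
            Ecomp q a y π * Ecomp q a y (b :: σ) := by
      have : ((shuffles π (b :: σ)).map ((fun τ => Ecomp q p v τ) ∘ (a :: ·)))
          = ((shuffles π (b :: σ)).map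
              (fun τ => ∑ y ∈ Finset.Icc (if a < p then v + 1 else v) q, Ecomp q a y τ)) := by
        refine List.map_congr_left fun τ _ => ?_
        simp [Ecomp]
      rw [this, list_sum_finset_sum]
      exact Finset.sum_congr rfl fun y _ => ih1 hd1 a y
    have e2 : ((shuffles (a :: π) σ).map ((fun τ => Ecomp q p v τ) ∘ (b :: ·))).sum
        = ∑ z ∈ Finset.Icc (if b < p then v + 1 else v) q,
            Ecomp q b z (a :: π) * Ecomp q b z σ := by
      have : ((shuffles (a :: π) σ).map ((fun τ => Ecomp q p v τ) ∘ (b :: ·)))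
          = ((shuffles (a :: π) σ).map
              (fun τ => ∑ z ∈ Finset.Icc (if b < p then v + 1 else v) q, Ecomp q b z τ)) := by
        refine List.map_congr_left fun τ _ => ?_
        simp [Ecomp]
      rw [this, list_sum_finset_sum]
      exact Finset.sum_congr rfl fun z _ => ih2 hd2 b z
    rw [e1, e2]
    rw [show Ecomp q p v (a :: π) = ∑ y ∈ Finset.Icc (if a < p then v + 1 else v) q,
          Ecomp q a y π from by rw [Ecomp],
        show Ecomp q p v (b :: σ) = ∑ z ∈ Finset.Icc (if b < p then v + 1 else v) q,
          Ecomp q b z σ from by rw [Ecomp]]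
    rcases lt_or_gt_of_ne hab with hlt | hlt
    · -- a < b
      have e3 : ∀ y, Ecomp q a y (b :: σ) = ∑ z ∈ Finset.Icc y q, Ecomp q b z σ := by
        intro y; rw [Ecomp, if_neg (by omega : ¬ b < a)]
      have e4 : ∀ z, Ecomp q b z (a :: π) = ∑ y ∈ Finset.Icc (z+1) q, Ecomp q a y π := by
        intro z; rw [Ecomp, if_pos hlt]
      simp only [e3, e4]
      exact rect' (fun y => Ecomp q a y π) (fun z => Ecomp q b z σ) q
        (if a < p then v + 1 else v) (if b < p then v + 1 else v)
        (by split <;> split <;> omega)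
        (by split <;> split <;> omega)
    · -- b < a
      have e3 : ∀ y, Ecomp q a y (b :: σ) = ∑ z ∈ Finset.Icc (y+1) q, Ecomp q b z σ := by
        intro y; rw [Ecomp, if_pos hlt]
      have e4 : ∀ z, Ecomp q b z (a :: π) = ∑ y ∈ Finset.Icc z q, Ecomp q a y π := by
        intro z; rw [Ecomp, if_neg (by omega : ¬ a < b)]
      simp only [e3, e4]
      have r := rect' (fun z => Ecomp q b z σ) (fun y => Ecomp q a y π) q
        (if b < p then v + 1 else v) (if a < p then v + 1 else v)
        (by split <;> split <;> omega)
        (by split <;> split <;> omega)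
      calc (∑ y ∈ Finset.Icc (if a < p then v + 1 else v) q,
              Ecomp q a y π * ∑ z ∈ Finset.Icc (y+1) q, Ecomp q b z σ)
            + ∑ z ∈ Finset.Icc (if b < p then v + 1 else v) q,
              (∑ y ∈ Finset.Icc z q, Ecomp q a y π) * Ecomp q b z σ
          = (∑ z ∈ Finset.Icc (if b < p then v + 1 else v) q,
              Ecomp q b z σ * ∑ y ∈ Finset.Icc z q, Ecomp q a y π)
            + ∑ y ∈ Finset.Icc (if a < p then v + 1 else v) q,
              (∑ z ∈ Finset.Icc (y+1) q, Ecomp q b z σ) * Ecomp q a y π := by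
            rw [add_comm]
            congr 1 <;> exact Finset.sum_congr rfl fun _ _ => mul_comm _ _
        _ = (∑ z ∈ Finset.Icc (if b < p then v + 1 else v) q, Ecomp q b z σ)
            * ∑ y ∈ Finset.Icc (if a < p then v + 1 else v) q, Ecomp q a y π := r
        _ = _ := mul_comm _ _
lemma dw_sum (l : List ℕ) (p : ℕ) :
    dw p l = ∑ j ∈ Finset.range l.length,
      if (p :: l).getD (j+1) 0 < (p :: l).getD j 0 then 1 else 0 := by
  induction l generalizing p with
  | nil => simp [dw]
  | cons a t ih =>
    rw [show (a :: t).length = t.length + 1 from rfl, Finset.sum_range_succ']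
    simp only [List.getD_cons_succ]
    rw [show dw p (a :: t) = (if a < p then 1 else 0) + dw a t from rfl, ih a]
    simp only [List.getD_cons_succ, List.getD_cons_zero]
    omega

lemma des_eq_dw (τ : List ℕ) : des τ = dw 0 τ := by
  rw [des, Des, Finset.card_filter, dw_sum]
  cases τ with
  | nil => simp
  | cons a t =>
    rw [Finset.sum_Ico_eq_sum_range]
    rw [show (a :: t).length = t.length + 1 from rfl, Finset.sum_range_succ']
    simp only [List.getD_cons_succ, List.getD_cons_zero]
    rw [if_neg (Nat.not_lt_zero a), add_zero, Nat.add_sub_cancel]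
    refine Finset.sum_congr rfl fun j _ => ?_
    have h1 : 1 + j - 1 = j := by omega
    have h2 : 1 + j = j + 1 := by omega
    rw [h1, h2]
    simp only [List.getD_cons_succ]

lemma des_le (τ : List ℕ) : des τ ≤ τ.length := by
  rw [des_eq_dw]; exact dw_le 0 τ

lemma extract (L k : ℕ) (hk : k ≤ L) (c d : ℕ → ℕ) (hlt : ∀ j, j < k → c j = d j)
    (h : ∑ j ∈ Finset.range (L+1), c j * Nat.choose (k + L - j) L
       = ∑ j ∈ Finset.range (L+1), d j * Nat.choose (k + L - j) L) :
    c k = d k := by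
  have trunc : ∀ e : ℕ → ℕ, ∑ j ∈ Finset.range (L+1), e j * Nat.choose (k + L - j) L
      = (∑ j ∈ Finset.range k, e j * Nat.choose (k + L - j) L) + e k := by
    intro e
    rw [← Finset.sum_subset (Finset.range_subset_range.mpr (by omega : k + 1 ≤ L + 1))
      (fun j hjL hj => by
        have h1 : k < j := by simpa using hj
        have h2 : j < L + 1 := by simpa using hjL
        rw [Nat.choose_eq_zero_of_lt (by omega), mul_zero])]
    rw [Finset.sum_range_succ, Nat.add_sub_cancel_left, Nat.choose_self, mul_one]
  rw [trunc c, trunc d] at h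
  have : ∑ j ∈ Finset.range k, c j * Nat.choose (k + L - j) L
      = ∑ j ∈ Finset.range k, d j * Nat.choose (k + L - j) L :=
    Finset.sum_congr rfl fun j hj => by rw [hlt j (Finset.mem_range.mp hj)]
  omega
lemma msum_eq (L : ℕ) (s : Multiset ℕ) (hs : ∀ k ∈ s, k ≤ L) (q : ℕ) :
    (s.map (fun k => Nat.choose (q + L - k) L)).sum
      = ∑ j ∈ Finset.range (L+1), s.count j * Nat.choose (q + L - j) L := by
  rw [Finset.sum_multiset_map_count]
  have hsub : s.toFinset ⊆ Finset.range (L+1) := fun x hx =>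
    Finset.mem_range.mpr (Nat.lt_succ_of_le (hs x (Multiset.mem_toFinset.mp hx)))
  rw [Finset.sum_subset hsub
    (fun j _ hj => by
      rw [Multiset.count_eq_zero_of_notMem (fun hm => hj (Multiset.mem_toFinset.mpr hm))]
      simp)]
  simp [smul_eq_mul]

lemma multiset_eq_of_sums (L : ℕ) (s t : Multiset ℕ)
    (hs : ∀ k ∈ s, k ≤ L) (ht : ∀ k ∈ t, k ≤ L)
    (h : ∀ q, (s.map (fun k => Nat.choose (q + L - k) L)).sum
            = (t.map (fun k => Nat.choose (q + L - k) L)).sum) : s = t := by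
  have key : ∀ k, k ≤ L → s.count k = t.count k := by
    intro k
    induction k using Nat.strong_induction_on with
    | _ k ih =>
      intro hk
      have hq := h k
      rw [msum_eq L s hs k, msum_eq L t ht k] at hq
      exact extract L k hk _ _ (fun j hj => ih j hj (by omega)) hq
  ext k
  by_cases hk : k ≤ L
  · exact key k hk
  · rw [Multiset.count_eq_zero_of_notMem (fun hm => hk (hs k hm)),
        Multiset.count_eq_zero_of_notMem (fun hm => hk (ht k hm))]

lemma shuffle_sum (π σ : List ℕ) (hd : π.Disjoint σ) (q : ℕ) :
    ((shuffles π σ).map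
        (fun τ => Nat.choose (q + (π.length + σ.length) - des τ) (π.length + σ.length))).sum
      = Nat.choose (q + π.length - des π) π.length
        * Nat.choose (q + σ.length - des σ) σ.length := by
  have h1 : ((shuffles π σ).map (fun τ => Ecomp q 0 0 τ)).sum
      = Ecomp q 0 0 π * Ecomp q 0 0 σ := Eshuf q π σ hd 0 0
  have h2 : ((shuffles π σ).map (fun τ => Ecomp q 0 0 τ))
      = ((shuffles π σ).map
        (fun τ => Nat.choose (q + (π.length + σ.length) - des τ) (π.length + σ.length))) := by
    refine List.map_congr_left fun τ hτ => ?_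
    rw [Ecomp_eq, des_eq_dw, shuffles_length π σ τ hτ, add_zero]
  rw [h2] at h1
  rw [h1, Ecomp_eq, Ecomp_eq, des_eq_dw, des_eq_dw, add_zero, add_zero]

/-- The descent number statistic `des` is shuffle compatible. -/
theorem stmt12 : ShuffleCompatible des := by
  intro π π' σ σ' hπ hπ' hσ hσ' hlen1 hlen2 hd hd' hdes1 hdes2
  set L := π.length + σ.length with hL
  have hL' : π'.length + σ'.length = L := by omega
  have hmem : ∀ (ρ κ : List ℕ), ρ.length + κ.length = L →
      ∀ k ∈ ((((shuffles ρ κ).map des : List ℕ)) : Multiset ℕ), k ≤ L := by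
    intro ρ κ hlk k hk
    rw [Multiset.mem_coe, List.mem_map] at hk
    obtain ⟨τ, hτ, rfl⟩ := hk
    have := des_le τ
    rw [shuffles_length ρ κ τ hτ] at this
    omega
  refine multiset_eq_of_sums L _ _ (hmem π σ rfl) (hmem π' σ' hL') fun q => ?_
  have conv : ∀ (ρ κ : List ℕ), ρ.length + κ.length = L → ρ.Disjoint κ →
      (((((shuffles ρ κ).map des : List ℕ)) : Multiset ℕ).map
        (fun k => Nat.choose (q + L - k) L)).sum
      = Nat.choose (q + ρ.length - des ρ) ρ.length
        * Nat.choose (q + κ.length - des κ) κ.length := by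
    intro ρ κ hlk hdj
    rw [← hlk]
    simp only [Multiset.map_coe, Multiset.sum_coe, List.map_map]
    exact shuffle_sum ρ κ hdj q
  rw [conv π σ rfl hd, conv π' σ' hL' hd', hdes1, hdes2, hlen1, hlen2]
end

section
/- For any permutation π with |π| ≥ 2, the number of updown runs satisfies udr(π) = 2·lpk(π) + χ⁺(π), where lpk(π) is the number of left peaks of π and χ⁺(π) is 1 if the final two entries of π form an ascent and 0 otherwise. -/
/-- `χ⁺(τ) = 1` iff the final two entries of `τ` form an ascent. -/
def chiPlus (τ : List ℕ) : ℕ :=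
  if τ.getD (τ.length - 2) 0 < τ.getD (τ.length - 1) 0 then 1 else 0

lemma pk_val_disjoint (τ : List ℕ) : Disjoint (Pk τ) (Val τ) := by
  rw [Finset.disjoint_left]
  intro i hi hv
  simp only [Pk, Val, Finset.mem_filter] at hi hv
  omega

lemma key : ∀ (τ : List ℕ), 2 ≤ τ.length →
    (∀ i, i + 1 < τ.length → τ.getD i 0 ≠ τ.getD (i+1) 0) →
    τ.getD 0 0 < τ.getD 1 0 →
    1 + (Pk τ ∪ Val τ).card = 2 * (Pk τ).card +
      (if τ.getD (τ.length - 2) 0 < τ.getD (τ.length - 1) 0 then 1 else 0) := by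
  intro τ
  induction τ using List.reverseRecOn with
  | nil => simp
  | append_singleton τ b ih =>
    intro hlen hne hasc
    rw [List.length_append, List.length_singleton] at hlen
    by_cases hτ2 : 2 ≤ τ.length
    case neg =>
      have hl1 : τ.length = 1 := by omega
      have hPk : Pk (τ ++ [b]) = ∅ := by
        simp [Pk, List.length_append, hl1]
      have hVal : Val (τ ++ [b]) = ∅ := by
        simp [Val, List.length_append, hl1]
      rw [hPk, hVal]
      have e : (τ ++ [b]).length - 2 = 0 ∧ (τ ++ [b]).length - 1 = 1 := by
        constructor <;> simp [hl1]
      rw [e.1, e.2, if_pos hasc]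
      simp
    case pos =>
      set n := τ.length with hn
      have hlenσ : (τ ++ [b]).length = n + 1 := by simp [hn]
      have hgτ : ∀ i, i < n → (τ ++ [b]).getD i 0 = τ.getD i 0 := fun i hi =>
        List.getD_append τ [b] 0 i hi
      have hgb : (τ ++ [b]).getD n 0 = b := by
        rw [List.getD_eq_getElem _ 0 (by simp [hn]), List.getElem_append_right (le_refl n)]
        simp
      have hneτ : ∀ i, i + 1 < n → τ.getD i 0 ≠ τ.getD (i+1) 0 := by
        intro i hi
        rw [← hgτ i (by omega), ← hgτ (i+1) (by omega)]
        exact hne i (by simp; omega)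
      have hascτ : τ.getD 0 0 < τ.getD 1 0 := by
        rw [← hgτ 0 (by omega), ← hgτ 1 (by omega)]; exact hasc
      have IH := ih hτ2 hneτ hascτ
      set a1 := τ.getD (n - 2) 0 with ha1
      set a2 := τ.getD (n - 1) 0 with ha2
      have hIco : Finset.Ico 2 (n + 1) = insert n (Finset.Ico 2 n) :=
        Nat.Ico_succ_right_eq_insert_Ico hτ2
      have hfilter : ∀ (p : ℕ → ℕ → ℕ → Prop) (_ : ∀ x y z, Decidable (p x y z)),
          (Finset.Ico 2 n).filter
            (fun i => p ((τ ++ [b]).getD (i-2) 0) ((τ ++ [b]).getD (i-1) 0) ((τ ++ [b]).getD i 0)) =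
          (Finset.Ico 2 n).filter
            (fun i => p (τ.getD (i-2) 0) (τ.getD (i-1) 0) (τ.getD i 0)) := by
        intro p _
        apply Finset.filter_congr
        intro i hi
        simp only [Finset.mem_Ico] at hi
        rw [hgτ (i-2) (by omega), hgτ (i-1) (by omega), hgτ i (by omega)]
      have hPkeq : Pk (τ ++ [b]) =
          if a1 < a2 ∧ b < a2 then insert n (Pk τ) else Pk τ := by
        unfold Pk
        rw [hlenσ, hIco, Finset.filter_insert]
        rw [hfilter (fun x y z => x < y ∧ z < y) (fun _ _ _ => inferInstance)]
        have e2 : (τ ++ [b]).getD (n-2) 0 = a1 := by rw [hgτ (n-2) (by omega)]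
        have e1 : (τ ++ [b]).getD (n-1) 0 = a2 := by rw [hgτ (n-1) (by omega)]
        rw [e2, e1, hgb]
      have hValeq : Val (τ ++ [b]) =
          if a2 < a1 ∧ a2 < b then insert n (Val τ) else Val τ := by
        unfold Val
        rw [hlenσ, hIco, Finset.filter_insert]
        rw [hfilter (fun x y z => y < x ∧ y < z) (fun _ _ _ => inferInstance)]
        have e2 : (τ ++ [b]).getD (n-2) 0 = a1 := by rw [hgτ (n-2) (by omega)]
        have e1 : (τ ++ [b]).getD (n-1) 0 = a2 := by rw [hgτ (n-1) (by omega)]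
        rw [e2, e1, hgb]
      have hnPk : n ∉ Pk τ := by
        intro h; simp only [Pk, Finset.mem_filter, Finset.mem_Ico] at h; omega
      have hnVal : n ∉ Val τ := by
        intro h; simp only [Val, Finset.mem_filter, Finset.mem_Ico] at h; omega
      have hdisj := pk_val_disjoint τ
      have hchi : (if (τ ++ [b]).getD ((τ ++ [b]).length - 2) 0 <
          (τ ++ [b]).getD ((τ ++ [b]).length - 1) 0 then (1:ℕ) else 0) =
          (if a2 < b then (1:ℕ) else 0) := by
        rw [hlenσ]
        have e : n + 1 - 2 = n - 1 := by omega
        rw [e, Nat.add_sub_cancel, hgτ (n-1) (by omega), hgb]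
      have h12 : a1 ≠ a2 := by
        have := hneτ (n-2) (by omega)
        have e : n - 2 + 1 = n - 1 := by omega
        rwa [e] at this
      have h2b : a2 ≠ b := by
        have := hne (n-1) (by simp; omega)
        have e : n - 1 + 1 = n := by omega
        rw [e, hgτ (n-1) (by omega), hgb] at this
        exact this
      rw [Finset.card_union_of_disjoint hdisj] at IH
      rw [hchi, hPkeq, hValeq]
      rcases lt_or_gt_of_ne h12 with h12' | h12' <;>
        rcases lt_or_gt_of_ne h2b with h2b' | h2b'
      · -- a1 < a2, a2 < b : nothing new
        rw [if_neg (by omega), if_neg (by omega), if_pos h2b',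
          Finset.card_union_of_disjoint hdisj]
        rw [if_pos h12'] at IH
        omega
      · -- a1 < a2, b < a2 : new peak
        rw [if_pos ⟨h12', h2b'⟩, if_neg (by omega), if_neg (by omega)]
        rw [Finset.card_union_of_disjoint (by
          rw [Finset.disjoint_insert_left]; exact ⟨hnVal, hdisj⟩),
          Finset.card_insert_of_notMem hnPk]
        rw [if_pos h12'] at IH
        omega
      · -- a2 < a1, a2 < b : new valley
        rw [if_neg (by omega), if_pos ⟨h12', h2b'⟩, if_pos h2b']
        rw [Finset.card_union_of_disjoint (by
          rw [Finset.disjoint_insert_right]; exact ⟨hnPk, hdisj⟩),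
          Finset.card_insert_of_notMem hnVal]
        rw [if_neg (by omega)] at IH
        omega
      · -- a2 < a1, b < a2 : nothing new
        rw [if_neg (by omega), if_neg (by omega), if_neg (by omega),
          Finset.card_union_of_disjoint hdisj]
        rw [if_neg (by omega)] at IH
        omega

lemma getD_adj_ne {τ : List ℕ} (h : τ.Nodup) {i : ℕ} (hi : i + 1 < τ.length) :
    τ.getD i 0 ≠ τ.getD (i+1) 0 := by
  rw [List.getD_eq_getElem τ 0 (by omega), List.getD_eq_getElem τ 0 hi]
  intro he
  have := (h.getElem_inj_iff).1 he
  omega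

lemma stmt17' (π : List ℕ) (hπ : π.Nodup ∧ ∀ x ∈ π, 0 < x) (hlen : 2 ≤ π.length) :
    (1 + (Pk (0 :: π) ∪ Val (0 :: π)).card) =
    2 * ((Pk (0 :: π)).image (· - 1)).card +
    (if π.getD (π.length - 2) 0 < π.getD (π.length - 1) 0 then 1 else 0) := by
  have hnd : (0 :: π).Nodup := by
    refine List.nodup_cons.2 ⟨fun h => ?_, hπ.1⟩
    exact absurd (hπ.2 0 h) (by omega)
  have hasc : (0 :: π).getD 0 0 < (0 :: π).getD 1 0 := by
    simp only [List.getD_cons_zero, List.getD_cons_succ]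
    rw [List.getD_eq_getElem π 0 (by omega)]
    exact hπ.2 _ (List.getElem_mem _)
  have hk := key (0 :: π) (by simp; omega)
    (fun i hi => getD_adj_ne hnd hi) hasc
  have himg : ((Pk (0 :: π)).image (· - 1)).card = (Pk (0 :: π)).card := by
    apply Finset.card_image_of_injOn
    intro x hx y hy he
    unfold Pk at hx hy
    rw [Finset.mem_coe, Finset.mem_filter, Finset.mem_Ico] at hx hy
    have hxy : x - 1 = y - 1 := he
    omega
  rw [himg]
  have e2 : (0 :: π).getD ((0 :: π).length - 2) 0 = π.getD (π.length - 2) 0 := by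
    have : (0 :: π).length - 2 = (π.length - 2) + 1 := by simp; omega
    rw [this, List.getD_cons_succ]
  have e1 : (0 :: π).getD ((0 :: π).length - 1) 0 = π.getD (π.length - 1) 0 := by
    have : (0 :: π).length - 1 = (π.length - 1) + 1 := by simp; omega
    rw [this, List.getD_cons_succ]
  rw [e2, e1] at hk
  exact hk


/-- For `|π| ≥ 2`, the number of updown runs satisfies
`udr π = 2·lpk π + χ⁺ π`. -/
theorem stmt17 (π : List ℕ) (hπ : IsPerm π) (hlen : 2 ≤ π.length) :
    udr π = 2 * lpk π + chiPlus π := by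
  have hπne : π ≠ [] := by intro h; rw [h] at hlen; simp at hlen
  unfold udr lpk Lpk chiPlus
  rw [if_neg hπne]
  exact stmt17' π hπ hlen
end
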